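/- arXiv:1301.2237 — 3 statements merged into one kernel-verified Lean document; each statement's English description precedes it below -/
import Mathlib

section
/- Let X₁,...,X_N be discrete random variables and let A ⊆ {1,...,N} with complement Ā. If X₁,...,X_N are conditionally independent given W, then I(X₁,...,X_N;W) ≥ I(X^A; X^Ā), where X^A denotes the subvector indexed by A. Consequently C(X₁,...,X_N) ≥ max_A I(X^A;X^Ā). -/
open scoped BigOperators

/-- Shannon entropy of a pmf on a finite alphabet (natural log). -/
noncomputable def ent {A : Type*} [Fintype A] (p : A → ℝ) : ℝ :=
  -∑ a, p a * Real.log (p a)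

/-- `p` is a probability mass function. -/
def IsPMF {A : Type*} [Fintype A] (p : A → ℝ) : Prop :=
  (∀ a, 0 ≤ p a) ∧ ∑ a, p a = 1

/-!
Conditional independence of all coordinates given `W` makes in particular the blocks `X^A` and
`X^Ā` independent given `W`: `P(x, w) P(w) = P(x_A, w) P(x_Ā, w)`, which in entropies reads
`H(X, W) + H(W) = H(X_A, W) + H(X_Ā, W)`. Conditioning reduces entropy, so
`H(X | X_A, W) ≤ H(X | X_A)` and `H(X | X_Ā, W) ≤ H(X | X_Ā)`; both are instances of Gibbs'
inequality. Adding these two inequalities to the identity gives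
`H(X_A) + H(X_Ā) - H(X) ≤ I(X; W)`.
-/

open Real Finset

theorem mul_log_le_mul_log_add_sub {p s : ℝ} (hp : 0 ≤ p) (hs : 0 ≤ s) (hps : 0 < p → 0 < s) :
    p * log s ≤ p * log p + (s - p) := by
  rcases hp.eq_or_lt with rfl | hp
  · simpa using hs
  have hs := hps hp
  have key : log (s / p) ≤ s / p - 1 := log_le_sub_one_of_pos (div_pos hs hp)
  rw [log_div hs.ne' hp.ne'] at key
  have := mul_le_mul_of_nonneg_left key hp.le
  rw [mul_sub, mul_sub, mul_div_cancel₀ _ hp.ne', mul_one] at this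
  linarith

/-- Gibbs' inequality. -/
theorem sum_mul_log_le_sum_mul_log {ι : Type*} [Fintype ι] {p s : ι → ℝ} (hp : ∀ i, 0 ≤ p i)
    (hs : ∀ i, 0 ≤ s i) (hsum : ∑ i, s i ≤ ∑ i, p i) (hps : ∀ i, 0 < p i → 0 < s i) :
    ∑ i, p i * log (s i) ≤ ∑ i, p i * log (p i) := by
  have := sum_le_sum fun i (_ : i ∈ univ) => mul_log_le_mul_log_add_sub (hp i) (hs i) (hps i)
  rw [sum_add_distrib, sum_sub_distrib] at this
  linarith

section Pushforward

variable {Ω α β : Type*} [Fintype Ω] [DecidableEq α]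

def pushforward (f : Ω → α) (P : Ω → ℝ) (a : α) : ℝ :=
  ∑ z, if f z = a then P z else 0

variable {P : Ω → ℝ}

theorem pushforward_nonneg (hP : ∀ z, 0 ≤ P z) (f : Ω → α) (a : α) : 0 ≤ pushforward f P a :=
  sum_nonneg fun z _ => by split_ifs <;> simp [hP z]

theorem le_pushforward_apply (hP : ∀ z, 0 ≤ P z) (f : Ω → α) (z : Ω) :
    P z ≤ pushforward f P (f z) := by
  have := single_le_sum (f := fun z' => if f z' = f z then P z' else 0)
    (fun z' _ => by split_ifs <;> simp [hP z']) (mem_univ z)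
  simpa [pushforward] using this

variable [Fintype α]

theorem sum_mul_pushforward (f : Ω → α) (P : Ω → ℝ) (G : α → ℝ) :
    ∑ a, pushforward f P a * G a = ∑ z, P z * G (f z) := by
  simp only [pushforward, sum_mul, ite_mul, zero_mul]
  rw [sum_comm]
  simp

theorem sum_pushforward (f : Ω → α) (P : Ω → ℝ) : ∑ a, pushforward f P a = ∑ z, P z := by
  simpa using sum_mul_pushforward f P 1

theorem ent_pushforward (f : Ω → α) (P : Ω → ℝ) :
    ent (pushforward f P) = -∑ z, P z * log (pushforward f P (f z)) := by
  rw [ent, sum_mul_pushforward f P fun a => log (pushforward f P a)]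

theorem pushforward_pushforward [DecidableEq β] (f : Ω → α) (g : α → β) (P : Ω → ℝ) :
    pushforward g (pushforward f P) = pushforward (g ∘ f) P := by
  ext b
  simpa [pushforward] using sum_mul_pushforward f P fun a => if g a = b then 1 else 0

end Pushforward

section ProductSpace

variable {α β : Type*} [Fintype α] [Fintype β]

theorem pushforward_fst [DecidableEq α] (P : α × β → ℝ) :
    pushforward Prod.fst P = fun a => ∑ b, P (a, b) := by
  ext a
  rw [pushforward, Fintype.sum_prod_type, sum_eq_single a] <;> simp +contextual

theorem pushforward_snd [DecidableEq β] (P : α × β → ℝ) :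
    pushforward Prod.snd P = fun b => ∑ a, P (a, b) := by
  ext b
  rw [pushforward, Fintype.sum_prod_type]
  exact sum_congr rfl fun a _ => by simp

theorem pushforward_prodMap_id_apply {γ : Type*} [DecidableEq β] [DecidableEq γ] (f : α → γ)
    (P : α × β → ℝ) (c : γ) (b : β) :
    pushforward (Prod.map f id) P (c, b) = ∑ a, if f a = c then P (a, b) else 0 := by
  rw [pushforward, Fintype.sum_prod_type]
  refine sum_congr rfl fun a _ => ?_
  rw [sum_eq_single b] <;> simp +contextual [Prod.ext_iff]

variable {γ δ : Type*} [Fintype γ] [Fintype δ] [DecidableEq β] [DecidableEq γ]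
  [DecidableEq δ] {P : α × β → ℝ}

noncomputable def mutualInfo [DecidableEq α] (P : α × β → ℝ) : ℝ :=
  ent (pushforward Prod.fst P) + ent (pushforward Prod.snd P) - ent P

/-- `H(X | f X, W) ≤ H(X | f X)` for `(X, W)` distributed according to `P`. -/
theorem ent_sub_ent_pushforward_prodMap_le [DecidableEq α] (hP : ∀ z, 0 ≤ P z) (f : α → γ) :
    ent P - ent (pushforward (Prod.map f id) P)
      ≤ ent (pushforward Prod.fst P) - ent (pushforward (f ∘ Prod.fst) P) := by
  rw [ent, ent_pushforward, ent_pushforward, ent_pushforward]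
  dsimp only [Function.comp_apply, Prod.map, id_eq]
  set m := pushforward Prod.fst P
  set a := pushforward (Prod.map f id) P
  set c := pushforward (f ∘ Prod.fst) P
  have hac : ∀ x, ∑ b, a (f x, b) = c (f x) := fun x => by
    have := congrFun (pushforward_pushforward (Prod.map f id) Prod.fst P) (f x)
    rw [pushforward_fst] at this
    exact this
  have hpos : ∀ z, 0 < P z → 0 < m z.1 ∧ 0 < a (f z.1, z.2) ∧ 0 < c (f z.1) := fun z hz =>
    ⟨hz.trans_le (le_pushforward_apply hP _ z), hz.trans_le (le_pushforward_apply hP _ z),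
      hz.trans_le (le_pushforward_apply hP _ z)⟩
  -- the law of `X` given `f X`, times the law of `(f X, W)`
  set s : α × β → ℝ := fun z => m z.1 * a (f z.1, z.2) / c (f z.1)
  have hs : ∀ z, 0 ≤ s z := fun z => div_nonneg
    (mul_nonneg (pushforward_nonneg hP _ _) (pushforward_nonneg hP _ _)) (pushforward_nonneg hP _ _)
  have hmass : ∑ z, s z ≤ ∑ z, P z :=
    calc ∑ z, s z = ∑ x, m x * (c (f x) / c (f x)) := by
          simp only [s, Fintype.sum_prod_type, ← sum_div, ← mul_sum, hac, mul_div_assoc]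
      _ ≤ ∑ x, m x := sum_le_sum fun x _ =>
          mul_le_of_le_one_right (pushforward_nonneg hP _ x) (div_self_le_one _)
      _ = ∑ z, P z := sum_pushforward _ _
  have hsupp : ∀ z, 0 < P z → 0 < s z := fun z hz => by
    obtain ⟨hm, ha, hc⟩ := hpos z hz
    positivity
  have hlog : ∀ z, P z * log (s z)
      = P z * log (m z.1) + P z * log (a (f z.1, z.2)) - P z * log (c (f z.1)) := fun z => by
    rcases (hP z).eq_or_lt with hz | hz
    · simp [← hz]
    obtain ⟨hm, ha, hc⟩ := hpos z hz
    rw [log_div (by positivity) hc.ne', log_mul hm.ne' ha.ne']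
    ring
  have gibbs := sum_mul_log_le_sum_mul_log hP hs hmass hsupp
  simp only [hlog, sum_add_distrib, sum_sub_distrib] at gibbs
  linarith

theorem ent_add_ent_pushforward_snd_eq (hP : ∀ z, 0 ≤ P z) {f : α → γ} {g : α → δ}
    (hfac : ∀ x b, P (x, b) * pushforward Prod.snd P b
      = pushforward (Prod.map f id) P (f x, b) * pushforward (Prod.map g id) P (g x, b)) :
    ent P + ent (pushforward Prod.snd P)
      = ent (pushforward (Prod.map f id) P) + ent (pushforward (Prod.map g id) P) := by
  rw [ent, ent_pushforward, ent_pushforward, ent_pushforward, ← neg_add, ← neg_add,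
    ← sum_add_distrib, ← sum_add_distrib]
  congr 1
  refine sum_congr rfl fun ⟨x, b⟩ _ => ?_
  dsimp only [Prod.map, id_eq]
  rcases (hP (x, b)).eq_or_lt with hz | hz
  · simp [← hz]
  have hq : 0 < pushforward Prod.snd P b := hz.trans_le (le_pushforward_apply hP _ (x, b))
  have ha : 0 < pushforward (Prod.map f id) P (f x, b) :=
    hz.trans_le (le_pushforward_apply hP _ (x, b))
  have hb : 0 < pushforward (Prod.map g id) P (g x, b) :=
    hz.trans_le (le_pushforward_apply hP _ (x, b))
  rw [← mul_add, ← mul_add, ← log_mul hz.ne' hq.ne', ← log_mul ha.ne' hb.ne', hfac]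

theorem ent_add_ent_sub_ent_le_mutualInfo [DecidableEq α] (hP : ∀ z, 0 ≤ P z) {f : α → γ}
    {g : α → δ}
    (hfac : ∀ x b, P (x, b) * pushforward Prod.snd P b
      = pushforward (Prod.map f id) P (f x, b) * pushforward (Prod.map g id) P (g x, b)) :
    ent (pushforward (f ∘ Prod.fst) P) + ent (pushforward (g ∘ Prod.fst) P)
      - ent (pushforward Prod.fst P) ≤ mutualInfo P := by
  have hf := ent_sub_ent_pushforward_prodMap_le hP f
  have hg := ent_sub_ent_pushforward_prodMap_le hP g
  have hPq := ent_add_ent_pushforward_snd_eq hP hfac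
  rw [mutualInfo]
  linarith

end ProductSpace

section ConditionalIndependence

variable {ι : Type*} [Fintype ι] [DecidableEq ι] {X : ι → Type*} [∀ i, Fintype (X i)]
  [∀ i, DecidableEq (X i)]

theorem sum_ite_forall_imp_eq_prod (p : ι → Prop) [DecidablePred p] (F : ∀ i, X i → ℝ)
    (x : ∀ i, X i) :
    ∑ y : ∀ i, X i, (if ∀ i, p i → y i = x i then ∏ i, F i (y i) else 0)
      = ∏ i, if p i then F i (x i) else ∑ t, F i t := by
  have hfactor : ∀ i, (if p i then F i (x i) else ∑ t, F i t)
      = ∑ t ∈ if p i then {x i} else univ, F i t := fun i => by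
    split_ifs <;> simp
  simp_rw [hfactor, Finset.prod_univ_sum, ← sum_filter]
  congr 1
  ext y
  simp only [mem_filter, mem_univ, true_and, Fintype.mem_piFinset]
  refine forall_congr' fun i => ?_
  split_ifs <;> simp [*]

theorem sum_ite_mul_sum_ite_of_eq_prod {r : (∀ i, X i) → ℝ} {F : ∀ i, X i → ℝ}
    (hr : ∀ y, r y = ∏ i, F i (y i)) (p : ι → Prop) [DecidablePred p] (x : ∀ i, X i) :
    (∑ y, if ∀ i, p i → y i = x i then r y else 0)
        * (∑ y, if ∀ i, ¬p i → y i = x i then r y else 0)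
      = r x * ∏ i, ∑ t, F i t := by
  simp_rw [hr, sum_ite_forall_imp_eq_prod, ← prod_mul_distrib]
  refine prod_congr rfl fun i _ => ?_
  split_ifs <;> ring

/-- `hindep` is the independence of the coordinates under `r`, with the normalisation by the
mass of `r` cleared; then two complementary blocks of coordinates are independent as well. -/
theorem sum_ite_mul_sum_ite_eq_of_indep {r : (∀ i, X i) → ℝ} (hr : ∀ y, 0 ≤ r y)
    (hindep : ∀ x, r x * (∑ y, r y) ^ (Fintype.card ι - 1)
      = ∏ i, ∑ y, if y i = x i then r y else 0)
    (p : ι → Prop) [DecidablePred p] (x : ∀ i, X i) :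
    (∑ y, if ∀ i, p i → y i = x i then r y else 0)
        * (∑ y, if ∀ i, ¬p i → y i = x i then r y else 0)
      = r x * ∑ y, r y := by
  set Q := ∑ y, r y
  rcases isEmpty_or_nonempty ι with hι | hι
  · have hx : ∀ y : ∀ i, X i, y = x := fun y => Subsingleton.elim y x
    simp [Q, hx, Fintype.sum_subsingleton _ x]
  by_cases hQ : Q = 0
  · have hr0 : ∀ y, r y = 0 := fun y =>
      (sum_eq_zero_iff_of_nonneg fun y _ => hr y).mp hQ y (mem_univ y)
    simp [hr0]
  set c := Q ^ (Fintype.card ι - 1)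
  have hc : c ≠ 0 := pow_ne_zero _ hQ
  have hmarg : ∀ i, ∑ t, ∑ y : ∀ i, X i, (if y i = t then r y else 0) = Q := fun i => by
    rw [sum_comm]
    simp [Q]
  have hmass : ∏ i, ∑ t, ∑ y : ∀ i, X i, (if y i = t then r y else 0) = c * Q := by
    rw [prod_congr rfl fun i _ => hmarg i, prod_const, card_univ, ← pow_succ,
      Nat.sub_add_cancel Fintype.card_pos]
  have key := sum_ite_mul_sum_ite_of_eq_prod (r := fun y => r y * c)
    (F := fun i t => ∑ y, if y i = t then r y else 0) hindep p x
  simp only [hmass, ← ite_zero_mul, ← sum_mul] at key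
  refine mul_right_cancel₀ (mul_ne_zero hc hc) ?_
  linear_combination key

end ConditionalIndependence

/-- If `X₁, …, X_N` are conditionally independent given `W`, then for every
index set `A` (with complement `Ā`), `I(X₁,…,X_N;W) ≥ I(X^A; X^Ā)`. -/
theorem ci_ge_subset_mutual_information
    {N : ℕ} {𝒳 : Fin N → Type} [∀ i, Fintype (𝒳 i)] [∀ i, DecidableEq (𝒳 i)]
    {n : ℕ}
    (p : (∀ i, 𝒳 i) × Fin n → ℝ) (hp : IsPMF p)
    (hci : ∀ (x : ∀ i, 𝒳 i) (w : Fin n),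
      p (x, w) * (∑ y, p (y, w)) ^ (N - 1)
        = ∏ i, (∑ y : ∀ i, 𝒳 i, if y i = x i then p (y, w) else 0))
    (A : Finset (Fin N)) :
    ent (fun u : ∀ i : {i // i ∈ A}, 𝒳 i =>
        ∑ x : ∀ i, 𝒳 i, ∑ w, if (∀ i : {i // i ∈ A}, x i = u i) then p (x, w) else 0)
      + ent (fun v : ∀ i : {i // i ∉ A}, 𝒳 i =>
        ∑ x : ∀ i, 𝒳 i, ∑ w, if (∀ i : {i // i ∉ A}, x i = v i) then p (x, w) else 0)
      - ent (fun x : ∀ i, 𝒳 i => ∑ w, p (x, w))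
    ≤ ent (fun x : ∀ i, 𝒳 i => ∑ w, p (x, w))
      + ent (fun w => ∑ x : ∀ i, 𝒳 i, p (x, w))
      - ent p := by
  have hfac : ∀ x w, p (x, w) * pushforward Prod.snd p w
      = pushforward (Prod.map (Subtype.restrict (· ∈ A)) id) p (Subtype.restrict _ x, w)
        * pushforward (Prod.map (Subtype.restrict (· ∉ A)) id) p (Subtype.restrict _ x, w) := by
    intro x w
    simp only [pushforward_snd, pushforward_prodMap_id_apply, funext_iff, Subtype.forall,
      Subtype.restrict_apply]
    convert (sum_ite_mul_sum_ite_eq_of_indep (fun y => hp.1 (y, w)) (fun y => ?_) (· ∈ A) x).symm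
    rw [Fintype.card_fin]
    exact hci y w
  have key := ent_add_ent_sub_ent_le_mutualInfo hp.1 hfac
  rw [mutualInfo, pushforward_fst, pushforward_snd] at key
  convert key using 4 <;> ext u <;> rw [pushforward, Fintype.sum_prod_type] <;>
    exact sum_congr rfl fun x _ => sum_congr rfl fun w _ =>
      if_congr funext_iff.symm rfl rfl
end

section
/- Achievability part of the Gaussian common information: if X₁ = √ρ·W + √(1−ρ)·N₁ and X₂ = √ρ·W + √(1−ρ)·N₂ with W, N₁, N₂ mutually independent standard Gaussians and ρ ∈ [0,1), then X₁ and X₂ are conditionally independent given W, they are jointly Gaussian with correlation ρ, and I(X₁,X₂;W) = (1/2)·log((1+ρ)/(1−ρ)). -/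
open MeasureTheory ProbabilityTheory

/-- Differential entropy of a density `f` with respect to the canonical
(Lebesgue) measure (natural log). -/
noncomputable def dent {α : Type*} [MeasureSpace α] (f : α → ℝ) : ℝ :=
  -∫ x, f x * Real.log (f x)

/-- The `N(0,v)` density. -/
noncomputable def gauss1 (v x : ℝ) : ℝ :=
  (Real.sqrt (2 * Real.pi * v))⁻¹ * Real.exp (-(x ^ 2) / (2 * v))

/-- The standard bivariate Gaussian density with zero means, unit variances and
correlation `ρ`. -/
noncomputable def gauss2 (ρ x y : ℝ) : ℝ :=
  (2 * Real.pi * Real.sqrt (1 - ρ ^ 2))⁻¹ *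
    Real.exp (-(x ^ 2 - 2 * ρ * x * y + y ^ 2) / (2 * (1 - ρ ^ 2)))

/-- The joint density of `(X₁, X₂, W)` where `Xᵢ = √ρ·W + √(1−ρ)·Nᵢ`. -/
noncomputable def fXXW (ρ : ℝ) (z : ℝ × ℝ × ℝ) : ℝ :=
  gauss1 1 z.2.2 * gauss1 (1 - ρ) (z.1 - Real.sqrt ρ * z.2.2)
    * gauss1 (1 - ρ) (z.2.1 - Real.sqrt ρ * z.2.2)

open Real
open scoped ENNReal

/-! The map `(w, n₁, n₂) ↦ (√ρ w + n₁, √ρ w + n₂, w)` is a shear, so it preserves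
Lebesgue measure and differential entropy; it carries the product density of
`(W, √(1-ρ) N₁, √(1-ρ) N₂)` to `fXXW ρ`, whence `h(X₁, X₂, W) = h(N(0,1)) + 2 h(N(0,1-ρ))`.
Likewise the shear `(x, t) ↦ (x, ρ x + t)` splits the bivariate density into
`N(0,1) ⊗ N(0,1-ρ²)`, so `h(X₁, X₂) = h(N(0,1)) + h(N(0,1-ρ²))`. Since
`h(N(0,v)) = log(2πe v) / 2`, the mutual information is `log((1-ρ²)/(1-ρ)²) / 2`.
The bivariate marginal comes from Bayes' rule: given `(X₁, X₂) = (x, y)`, `W` is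
`N(√ρ (x+y)/(1+ρ), (1-ρ)/(1+ρ))`. -/

section Entropy

variable {α β : Type*} [MeasureSpace α] [MeasureSpace β]

lemma dent_eq_integral_negMulLog (f : α → ℝ) : dent f = ∫ x, negMulLog (f x) := by
  simp only [dent, negMulLog, neg_mul, integral_neg]

lemma dent_comp_measurePreserving {e : α ≃ᵐ β} (he : MeasurePreserving e) (f : β → ℝ) :
    dent (fun x => f (e x)) = dent f := by
  rw [dent, dent, he.integral_comp' (fun y => f y * log (f y))]

lemma negMulLog_mul' (x y : ℝ) : negMulLog (x * y) = negMulLog x * y + x * negMulLog y := by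
  rw [negMulLog_mul]; ring

lemma integrable_negMulLog_mul_prod {f : α → ℝ} {g : β → ℝ} (hf : Integrable f)
    (hg : Integrable g) (hfl : Integrable fun x => negMulLog (f x))
    (hgl : Integrable fun y => negMulLog (g y)) :
    Integrable fun p : α × β => negMulLog (f p.1 * g p.2) := by
  simp only [negMulLog_mul']
  exact (hfl.mul_prod hg).add (hf.mul_prod hgl)

lemma dent_mul_prod [SFinite (volume : Measure α)] [SFinite (volume : Measure β)]
    {f : α → ℝ} {g : β → ℝ} (hf : Integrable f) (hg : Integrable g)
    (hfl : Integrable fun x => negMulLog (f x)) (hgl : Integrable fun y => negMulLog (g y)) :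
    dent (fun p : α × β => f p.1 * g p.2) = dent f * (∫ y, g y) + (∫ x, f x) * dent g := by
  simp only [dent_eq_integral_negMulLog, negMulLog_mul']
  rw [Measure.volume_eq_prod, integral_add (hfl.mul_prod hg) (hf.mul_prod hgl),
    integral_prod_mul (fun x => negMulLog (f x)) g, integral_prod_mul f fun y => negMulLog (g y)]

end Entropy

section Gauss1

variable {v : ℝ}

lemma sqrt_two_pi_mul (v : ℝ) : √(2 * π * v) = √(2 * π) * √v :=
  Real.sqrt_mul (by positivity) v

lemma log_two_pi_mul (hv : 0 < v) : log (2 * π * v) = log (2 * π) + log v :=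
  log_mul (by positivity) hv.ne'

lemma gauss1_nonneg (v x : ℝ) : 0 ≤ gauss1 v x := by
  unfold gauss1; positivity

@[fun_prop]
lemma continuous_gauss1 (v : ℝ) : Continuous (gauss1 v) := by
  unfold gauss1; fun_prop

lemma gauss1_eq_gaussianPDFReal (hv : 0 ≤ v) : gauss1 v = gaussianPDFReal 0 v.toNNReal := by
  ext x
  simp [gauss1, gaussianPDFReal, hv]

variable (hv : 0 < v)
include hv

lemma integrable_gauss1 : Integrable (gauss1 v) := by
  rw [gauss1_eq_gaussianPDFReal hv.le]
  exact integrable_gaussianPDFReal 0 _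

lemma integral_gauss1 : ∫ x, gauss1 v x = 1 := by
  rw [gauss1_eq_gaussianPDFReal hv.le]
  exact integral_gaussianPDFReal_eq_one 0 (by simpa using hv)

lemma integral_gauss1_sub (c : ℝ) : ∫ x, gauss1 v (x - c) = 1 := by
  rw [integral_sub_right_eq_self (gauss1 v) c, integral_gauss1 hv]

lemma gaussianReal_eq_withDensity_gauss1 :
    gaussianReal 0 v.toNNReal = volume.withDensity fun x => ENNReal.ofReal (gauss1 v x) := by
  rw [gaussianReal_of_var_ne_zero 0 (by simpa using hv), gauss1_eq_gaussianPDFReal hv.le]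
  rfl

lemma integrable_sq_mul_gauss1 : Integrable fun x => x ^ 2 * gauss1 v x := by
  have h := (memLp_id_gaussianReal (μ := 0) (v := v.toNNReal) 2).integrable_sq
  rw [gaussianReal_eq_withDensity_gauss1 hv,
    integrable_withDensity_iff_integrable_smul' (continuous_gauss1 v).measurable.ennreal_ofReal
      (.of_forall fun _ => ENNReal.ofReal_lt_top)] at h
  simpa [ENNReal.toReal_ofReal (gauss1_nonneg v _), mul_comm] using h

lemma integral_sq_mul_gauss1 : ∫ x, x ^ 2 * gauss1 v x = v := by
  have h := variance_fun_id_gaussianReal (μ := 0) (v := v.toNNReal)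
  rw [variance_eq_integral measurable_id'.aemeasurable, integral_id_gaussianReal,
    integral_gaussianReal_eq_integral_smul (by simpa using hv), ← gauss1_eq_gaussianPDFReal hv.le]
    at h
  simpa [mul_comm, hv.le] using h

lemma log_gauss1 (x : ℝ) : log (gauss1 v x) = -(log (2 * π * v) / 2) - x ^ 2 / (2 * v) := by
  rw [gauss1, log_mul (by positivity) (exp_ne_zero _), log_inv, log_exp,
    log_sqrt (by positivity)]
  ring

lemma negMulLog_gauss1 (x : ℝ) :
    negMulLog (gauss1 v x)
      = log (2 * π * v) / 2 * gauss1 v x + (2 * v)⁻¹ * (x ^ 2 * gauss1 v x) := by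
  rw [negMulLog, log_gauss1 hv]
  ring

lemma integrable_negMulLog_gauss1 : Integrable fun x => negMulLog (gauss1 v x) := by
  simp only [negMulLog_gauss1 hv]
  exact ((integrable_gauss1 hv).const_mul _).add ((integrable_sq_mul_gauss1 hv).const_mul _)

lemma dent_gauss1 : dent (gauss1 v) = (log (2 * π * v) + 1) / 2 := by
  rw [dent_eq_integral_negMulLog]
  simp only [negMulLog_gauss1 hv]
  rw [integral_add ((integrable_gauss1 hv).const_mul _)
      ((integrable_sq_mul_gauss1 hv).const_mul _), integral_const_mul, integral_const_mul,
    integral_gauss1 hv, integral_sq_mul_gauss1 hv]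
  field_simp

end Gauss1

section WithDensity

variable {α β : Type*} [MeasurableSpace α] [MeasurableSpace β]

lemma MeasureTheory.MeasurePreserving.map_withDensity_comp {μ : Measure α} {ν : Measure β}
    {e : α → β} (he : MeasurePreserving e μ ν) {f : β → ℝ≥0∞} (hf : Measurable f) :
    (μ.withDensity fun x => f (e x)).map e = ν.withDensity f := by
  ext s hs
  rw [Measure.map_apply he.measurable hs, withDensity_apply _ (he.measurable hs),
    withDensity_apply _ hs, ← (he.restrict_preimage hs).map_eq, lintegral_map hf he.measurable]

lemma prod_withDensity_ofReal (μ : Measure α) (ν : Measure β) [SFinite μ] [SFinite ν]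
    {f : α → ℝ} {g : β → ℝ} (hf : Measurable f) (hg : Measurable g)
    (hf0 : ∀ x, 0 ≤ f x) :
    (μ.withDensity fun x => ENNReal.ofReal (f x)).prod
        (ν.withDensity fun y => ENNReal.ofReal (g y))
      = (μ.prod ν).withDensity fun p => ENNReal.ofReal (f p.1 * g p.2) := by
  simp only [prod_withDensity hf.ennreal_ofReal hg.ennreal_ofReal, ENNReal.ofReal_mul (hf0 _)]

end WithDensity

section Shear

variable {α G : Type*} [MeasurableSpace α] [MeasurableSpace G]
  [AddGroup G] [MeasurableAdd₂ G] [MeasurableNeg G] {g : α → G}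

def MeasurableEquiv.shearAdd (hg : Measurable g) : α × G ≃ᵐ α × G where
  toFun p := (p.1, g p.1 + p.2)
  invFun p := (p.1, -g p.1 + p.2)
  left_inv p := by simp
  right_inv p := by simp
  measurable_toFun := measurable_fst.prodMk ((hg.comp measurable_fst).add measurable_snd)
  measurable_invFun := measurable_fst.prodMk ((hg.comp measurable_fst).neg.add measurable_snd)

lemma measurePreserving_shearAdd (hg : Measurable g) (μ : Measure α) (ν : Measure G) [SFinite μ]
    [SFinite ν] [ν.IsAddLeftInvariant] :
    MeasurePreserving (MeasurableEquiv.shearAdd hg) (μ.prod ν) (μ.prod ν) :=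
  (MeasurePreserving.id μ).skew_product (g := fun x y => g x + y) (by fun_prop)
    (.of_forall fun x => map_add_left_eq_self ν (g x))

end Shear

def shear3 (a : ℝ) : ℝ × ℝ × ℝ ≃ᵐ ℝ × ℝ × ℝ :=
  (MeasurableEquiv.shearAdd (g := fun w : ℝ => (a * w, a * w)) (by fun_prop)).trans
    (MeasurableEquiv.prodComm.trans MeasurableEquiv.prodAssoc)

lemma shear3_apply (a : ℝ) (p : ℝ × ℝ × ℝ) :
    shear3 a p = (a * p.1 + p.2.1, a * p.1 + p.2.2, p.1) := rfl

lemma measurePreserving_shear3 (a : ℝ) : MeasurePreserving (shear3 a) := by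
  rw [shear3, MeasurableEquiv.coe_trans, MeasurableEquiv.coe_trans]
  exact ((measurePreserving_prodAssoc volume volume volume).comp
    Measure.measurePreserving_swap).comp (measurePreserving_shearAdd _ volume volume)

def shear2 (r : ℝ) : ℝ × ℝ ≃ᵐ ℝ × ℝ :=
  MeasurableEquiv.shearAdd (g := fun x : ℝ => r * x) (by fun_prop)

lemma shear2_apply (r : ℝ) (p : ℝ × ℝ) : shear2 r p = (p.1, r * p.1 + p.2) := rfl

lemma measurePreserving_shear2 (r : ℝ) : MeasurePreserving (shear2 r) :=
  measurePreserving_shearAdd _ volume volume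

lemma fXXW_shear3 (ρ : ℝ) (p : ℝ × ℝ × ℝ) :
    fXXW ρ (shear3 √ρ p) = gauss1 1 p.1 * (gauss1 (1 - ρ) p.2.1 * gauss1 (1 - ρ) p.2.2) := by
  simp only [fXXW, shear3_apply, add_sub_cancel_left]
  ring

lemma fXXW_eq_gauss2_mul_gauss1 {ρ : ℝ} (hρ0 : 0 ≤ ρ) (hρ1 : ρ < 1) (x y w : ℝ) :
    fXXW ρ (x, y, w)
      = gauss2 ρ x y * gauss1 ((1 - ρ) / (1 + ρ)) (w - √ρ * (x + y) / (1 + ρ)) := by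
  have hs : 0 < 1 - ρ := by linarith
  have ht : 0 < 1 + ρ := by linarith
  have ha : √ρ ^ 2 = ρ := Real.sq_sqrt hρ0
  simp only [fXXW, gauss2, gauss1]
  rw [mul_mul_mul_comm _ (rexp _), ← exp_add, mul_mul_mul_comm _ (rexp _), ← exp_add,
    mul_mul_mul_comm _ (rexp _), ← exp_add]
  congr 1
  · have hs0 : 0 < √(1 - ρ) := Real.sqrt_pos.2 hs
    have ht0 : 0 < √(1 + ρ) := Real.sqrt_pos.2 ht
    rw [sqrt_two_pi_mul, sqrt_two_pi_mul, sqrt_two_pi_mul, Real.sqrt_div' _ ht.le,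
      show 1 - ρ ^ 2 = (1 - ρ) * (1 + ρ) by ring, Real.sqrt_mul hs.le]
    field_simp
    rw [Real.sqrt_one, mul_one, Real.sq_sqrt (by positivity)]
  · congr 1
    rw [show 1 - ρ ^ 2 = (1 - ρ) * (1 + ρ) by ring]
    field_simp
    linear_combination ((x + y) ^ 2 - 2 * (1 + ρ) * w ^ 2) * ha

lemma gauss2_shear2 {ρ : ℝ} (hρ : ρ ^ 2 < 1) (p : ℝ × ℝ) :
    gauss2 ρ (shear2 ρ p).1 (shear2 ρ p).2 = gauss1 1 p.1 * gauss1 (1 - ρ ^ 2) p.2 := by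
  have hc : 0 < 1 - ρ ^ 2 := by linarith
  simp only [shear2_apply, gauss2, gauss1]
  rw [mul_mul_mul_comm _ (rexp _), ← exp_add]
  congr 1
  · have hs0 : 0 < √(1 - ρ ^ 2) := Real.sqrt_pos.2 hc
    rw [sqrt_two_pi_mul, sqrt_two_pi_mul]
    field_simp
    rw [Real.sqrt_one, mul_one, Real.sq_sqrt (by positivity)]
  · congr 1
    field_simp
    ring

section Model

variable {ρ : ℝ}

lemma integral_fXXW_w (hρ0 : 0 ≤ ρ) (hρ1 : ρ < 1) (x y : ℝ) :
    ∫ w, fXXW ρ (x, y, w) = gauss2 ρ x y := by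
  simp only [fXXW_eq_gauss2_mul_gauss1 hρ0 hρ1]
  rw [integral_const_mul, integral_gauss1_sub (by apply div_pos <;> linarith), mul_one]

lemma integral_fXXW_y (hρ1 : ρ < 1) (x w : ℝ) :
    ∫ y, fXXW ρ (x, y, w) = gauss1 1 w * gauss1 (1 - ρ) (x - √ρ * w) := by
  simp only [fXXW]
  rw [integral_const_mul, integral_gauss1_sub (by linarith), mul_one]

lemma integral_fXXW_x (hρ1 : ρ < 1) (y w : ℝ) :
    ∫ x, fXXW ρ (x, y, w) = gauss1 1 w * gauss1 (1 - ρ) (y - √ρ * w) := by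
  simp only [fXXW,
    mul_right_comm _ (gauss1 (1 - ρ) (_ - √ρ * w)) (gauss1 (1 - ρ) (y - √ρ * w))]
  rw [integral_const_mul, integral_gauss1_sub (by linarith), mul_one]

lemma integral_fXXW_xy (hρ1 : ρ < 1) (w : ℝ) :
    ∫ q : ℝ × ℝ, fXXW ρ (q.1, q.2, w) = gauss1 1 w := by
  rw [Measure.volume_eq_prod]
  simp only [fXXW]
  rw [integral_prod_mul (fun x => gauss1 1 w * gauss1 (1 - ρ) (x - √ρ * w))
      fun y => gauss1 (1 - ρ) (y - √ρ * w),
    integral_const_mul, integral_gauss1_sub (by linarith), mul_one, mul_one]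

lemma fXXW_condIndep (hρ1 : ρ < 1) (x y w : ℝ) :
    fXXW ρ (x, y, w) * (∫ q : ℝ × ℝ, fXXW ρ (q.1, q.2, w))
      = (∫ y', fXXW ρ (x, y', w)) * (∫ x', fXXW ρ (x', y, w)) := by
  rw [integral_fXXW_xy hρ1, integral_fXXW_y hρ1, integral_fXXW_x hρ1, fXXW]
  ring

end Model

section Entropies

variable {ρ : ℝ}

lemma dent_gauss1_mul_prod {u v : ℝ} (hu : 0 < u) (hv : 0 < v) :
    dent (fun p : ℝ × ℝ => gauss1 u p.1 * gauss1 v p.2)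
      = dent (gauss1 u) + dent (gauss1 v) := by
  rw [dent_mul_prod (integrable_gauss1 hu) (integrable_gauss1 hv)
    (integrable_negMulLog_gauss1 hu) (integrable_negMulLog_gauss1 hv), integral_gauss1 hu,
    integral_gauss1 hv, mul_one, one_mul]

lemma dent_fXXW (hρ1 : ρ < 1) :
    dent (fXXW ρ) = dent (gauss1 1) + 2 * dent (gauss1 (1 - ρ)) := by
  have hv : 0 < 1 - ρ := by linarith
  have hnoise : Integrable fun q : ℝ × ℝ => gauss1 (1 - ρ) q.1 * gauss1 (1 - ρ) q.2 :=
    (integrable_gauss1 hv).mul_prod (integrable_gauss1 hv)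
  have hnoise_negMulLog :
      Integrable fun q : ℝ × ℝ => negMulLog (gauss1 (1 - ρ) q.1 * gauss1 (1 - ρ) q.2) :=
    integrable_negMulLog_mul_prod (integrable_gauss1 hv) (integrable_gauss1 hv)
      (integrable_negMulLog_gauss1 hv) (integrable_negMulLog_gauss1 hv)
  have hnoise_one : ∫ q : ℝ × ℝ, gauss1 (1 - ρ) q.1 * gauss1 (1 - ρ) q.2 = 1 := by
    rw [Measure.volume_eq_prod, integral_prod_mul (gauss1 (1 - ρ)) (gauss1 (1 - ρ)),
      integral_gauss1 hv, one_mul]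
  rw [← dent_comp_measurePreserving (measurePreserving_shear3 √ρ)]
  simp only [fXXW_shear3]
  rw [dent_mul_prod (integrable_gauss1 one_pos) hnoise (integrable_negMulLog_gauss1 one_pos)
      hnoise_negMulLog, dent_gauss1_mul_prod hv hv, hnoise_one, integral_gauss1 one_pos]
  ring

lemma dent_gauss2 (hρ : ρ ^ 2 < 1) :
    dent (fun q : ℝ × ℝ => gauss2 ρ q.1 q.2)
      = dent (gauss1 1) + dent (gauss1 (1 - ρ ^ 2)) := by
  rw [← dent_comp_measurePreserving (measurePreserving_shear2 ρ)]
  simp only [gauss2_shear2 hρ]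
  exact dent_gauss1_mul_prod one_pos (by linarith)

end Entropies

lemma gaussianReal_map_sqrt_mul {v : ℝ} (hv : 0 ≤ v) :
    (gaussianReal 0 1).map (fun x => √v * x) = gaussianReal 0 v.toNNReal := by
  rw [gaussianReal_map_const_mul, mul_zero, mul_one]
  congr 1
  rw [← NNReal.coe_inj]
  simp [hv]

lemma law_eq_withDensity_fXXW {ρ : ℝ} (hρ1 : ρ < 1) :
    Measure.map
        (fun p : ℝ × ℝ × ℝ =>
          (√ρ * p.1 + √(1 - ρ) * p.2.1, √ρ * p.1 + √(1 - ρ) * p.2.2, p.1))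
        ((gaussianReal 0 1).prod ((gaussianReal 0 1).prod (gaussianReal 0 1)))
      = volume.withDensity (fun z => ENNReal.ofReal (fXXW ρ z)) := by
  have hv : 0 < 1 - ρ := by linarith
  have hscale : Measurable fun x : ℝ => √(1 - ρ) * x := by fun_prop
  have hnoise : (gaussianReal 0 1).prod ((gaussianReal 0 (1 - ρ).toNNReal).prod
      (gaussianReal 0 (1 - ρ).toNNReal)) = volume.withDensity fun p : ℝ × ℝ × ℝ =>
        ENNReal.ofReal (gauss1 1 p.1 * (gauss1 (1 - ρ) p.2.1 * gauss1 (1 - ρ) p.2.2)) := by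
    rw [← Real.toNNReal_one, gaussianReal_eq_withDensity_gauss1 one_pos,
      gaussianReal_eq_withDensity_gauss1 hv, prod_withDensity_ofReal _ _
        (by fun_prop) (by fun_prop) (gauss1_nonneg _),
      prod_withDensity_ofReal _ _ (by fun_prop) (by fun_prop) (gauss1_nonneg _)]
    rfl
  have hfactor : (fun p : ℝ × ℝ × ℝ =>
      (√ρ * p.1 + √(1 - ρ) * p.2.1, √ρ * p.1 + √(1 - ρ) * p.2.2, p.1))
      = shear3 √ρ ∘ Prod.map id (Prod.map (√(1 - ρ) * ·) (√(1 - ρ) * ·)) := rfl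
  have hdens : (fun p : ℝ × ℝ × ℝ =>
      ENNReal.ofReal (gauss1 1 p.1 * (gauss1 (1 - ρ) p.2.1 * gauss1 (1 - ρ) p.2.2)))
      = fun p => ENNReal.ofReal (fXXW ρ (shear3 √ρ p)) := by
    simp only [fXXW_shear3]
  have hmeas : Measurable fun z => ENNReal.ofReal (fXXW ρ z) := by
    unfold fXXW; fun_prop
  rw [hfactor, ← Measure.map_map (shear3 √ρ).measurable
      (measurable_id.prodMap (hscale.prodMap hscale)),
    ← Measure.map_prod_map _ _ measurable_id (hscale.prodMap hscale),
    ← Measure.map_prod_map _ _ hscale hscale, Measure.map_id, gaussianReal_map_sqrt_mul hv.le,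
    hnoise, hdens, (measurePreserving_shear3 √ρ).map_withDensity_comp hmeas]

/-- Achievability for the Gaussian common information: with `W, N₁, N₂` i.i.d.
standard Gaussians and `Xᵢ = √ρ·W + √(1−ρ)·Nᵢ`, `ρ ∈ [0,1)`: the triple
`(X₁,X₂,W)` has density `fXXW ρ`; `X₁` and `X₂` are conditionally independent
given `W`; `(X₁,X₂)` is bivariate Gaussian with correlation `ρ`; and
`I(X₁,X₂;W) = (1/2)·log((1+ρ)/(1−ρ))`. -/
theorem gaussian_common_information_achievability (ρ : ℝ) (hρ0 : 0 ≤ ρ) (hρ1 : ρ < 1) :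
    -- (X₁, X₂, W) has joint density fXXW ρ
    (Measure.map
        (fun p : ℝ × ℝ × ℝ =>
          (Real.sqrt ρ * p.1 + Real.sqrt (1 - ρ) * p.2.1,
            Real.sqrt ρ * p.1 + Real.sqrt (1 - ρ) * p.2.2, p.1))
        ((gaussianReal 0 1).prod ((gaussianReal 0 1).prod (gaussianReal 0 1)))
      = volume.withDensity (fun z => ENNReal.ofReal (fXXW ρ z))) ∧
    -- X₁ and X₂ are conditionally independent given W
    (∀ x y w, fXXW ρ (x, y, w) * (∫ q : ℝ × ℝ, fXXW ρ (q.1, q.2, w))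
        = (∫ y', fXXW ρ (x, y', w)) * (∫ x', fXXW ρ (x', y, w))) ∧
    -- (X₁, X₂) is jointly Gaussian with correlation ρ
    (∀ x y, (∫ w, fXXW ρ (x, y, w)) = gauss2 ρ x y) ∧
    -- I(X₁,X₂;W) = (1/2)·log((1+ρ)/(1−ρ))
    dent (fun q : ℝ × ℝ => ∫ w, fXXW ρ (q.1, q.2, w))
      + dent (fun w : ℝ => ∫ q : ℝ × ℝ, fXXW ρ (q.1, q.2, w)) - dent (fXXW ρ)
      = 1 / 2 * Real.log ((1 + ρ) / (1 - ρ)) := by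
  have hs : 0 < 1 - ρ := by linarith
  have ht : 0 < 1 + ρ := by linarith
  have hc : 0 < 1 - ρ ^ 2 := by nlinarith
  refine ⟨law_eq_withDensity_fXXW hρ1, fXXW_condIndep hρ1, integral_fXXW_w hρ0 hρ1, ?_⟩
  rw [funext fun q : ℝ × ℝ => integral_fXXW_w hρ0 hρ1 q.1 q.2,
    funext (integral_fXXW_xy hρ1),
    dent_gauss2 (by linarith), dent_fXXW hρ1, dent_gauss1 one_pos, dent_gauss1 hs,
    dent_gauss1 hc, mul_one, log_two_pi_mul hs, log_two_pi_mul hc,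
    show 1 - ρ ^ 2 = (1 + ρ) * (1 - ρ) by ring, log_mul ht.ne' hs.ne', log_div ht.ne' hs.ne']
  ring
end

section
/- If W achieves Wyner's common information of (X₁,X₂) (i.e., X₁ − W − X₂ and I(X₁,X₂;W) = C(X₁,X₂)) and the rate distortion functions satisfy R_{X₁X₂|W}(D₁,D₂) + C(X₁,X₂) = R_{X₁X₂}(D₁,D₂), then the minimum common message rate for the Gray-Wyner network with sum rate R_{X₁X₂}(D₁,D₂) satisfies C₃(D₁,D₂) ≤ C(X₁,X₂). -/
open scoped BigOperators

section RD

variable {𝒳 𝒴 𝒲 𝒳₁ 𝒳₂ 𝒴₁ 𝒴₂ : Type}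
  [Fintype 𝒳] [Fintype 𝒴] [Fintype 𝒲] [Fintype 𝒳₁] [Fintype 𝒳₂]
  [Fintype 𝒴₁] [Fintype 𝒴₂]

/-- `I(X₁;X₂)` from a pair pmf. -/
noncomputable def miPair (p : 𝒳₁ × 𝒳₂ → ℝ) : ℝ :=
  ent (fun x₁ => ∑ x₂, p (x₁, x₂)) + ent (fun x₂ => ∑ x₁, p (x₁, x₂)) - ent p

/-- `I(X₁,X₂;W)` from a triple pmf. -/
noncomputable def miXXW (q : 𝒳₁ × 𝒳₂ × 𝒲 → ℝ) : ℝ :=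
  ent (fun u : 𝒳₁ × 𝒳₂ => ∑ w, q (u.1, u.2, w))
    + ent (fun w => ∑ x₁, ∑ x₂, q (x₁, x₂, w)) - ent q

/-- `I(X₁;X₂|W)` from a triple pmf. -/
noncomputable def cmiXXW (q : 𝒳₁ × 𝒳₂ × 𝒲 → ℝ) : ℝ :=
  ent (fun u : 𝒳₁ × 𝒲 => ∑ x₂, q (u.1, x₂, u.2))
    + ent (fun u : 𝒳₂ × 𝒲 => ∑ x₁, q (x₁, u.1, u.2))
    - ent q - ent (fun w => ∑ x₁, ∑ x₂, q (x₁, x₂, w))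

/-- The (marginal) rate distortion function `R_X(D)`. -/
noncomputable def RDmarg (p : 𝒳 → ℝ) (d : 𝒳 → 𝒴 → ℝ) (D : ℝ) : ℝ :=
  sInf {r : ℝ | ∃ q : 𝒳 × 𝒴 → ℝ, IsPMF q ∧
    (∀ x, (∑ y, q (x, y)) = p x) ∧
    (∑ z, q z * d z.1 z.2) ≤ D ∧
    r = ent (fun x => ∑ y, q (x, y)) + ent (fun y => ∑ x, q (x, y)) - ent q}

/-- The joint rate distortion function `R_{X₁X₂}(D₁,D₂)`. -/
noncomputable def RDjoint (p : 𝒳₁ × 𝒳₂ → ℝ)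
    (d₁ : 𝒳₁ → 𝒴₁ → ℝ) (d₂ : 𝒳₂ → 𝒴₂ → ℝ) (D₁ D₂ : ℝ) : ℝ :=
  sInf {r : ℝ | ∃ q : (𝒳₁ × 𝒳₂) × 𝒴₁ × 𝒴₂ → ℝ, IsPMF q ∧
    (∀ x : 𝒳₁ × 𝒳₂, (∑ y₁, ∑ y₂, q (x, y₁, y₂)) = p x) ∧
    (∑ z, q z * d₁ z.1.1 z.2.1) ≤ D₁ ∧
    (∑ z, q z * d₂ z.1.2 z.2.2) ≤ D₂ ∧
    r = ent (fun x : 𝒳₁ × 𝒳₂ => ∑ y₁, ∑ y₂, q (x, y₁, y₂))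
        + ent (fun y : 𝒴₁ × 𝒴₂ => ∑ x : 𝒳₁ × 𝒳₂, q (x, y.1, y.2)) - ent q}

/-- The conditional rate distortion function `R_{X|W}(D)`, for a given joint
pmf `pw` of `(X, W)`. -/
noncomputable def RDcond (pw : 𝒳 × 𝒲 → ℝ) (d : 𝒳 → 𝒴 → ℝ) (D : ℝ) : ℝ :=
  sInf {r : ℝ | ∃ q : 𝒳 × 𝒲 × 𝒴 → ℝ, IsPMF q ∧
    (∀ x w, (∑ y, q (x, w, y)) = pw (x, w)) ∧
    (∑ z, q z * d z.1 z.2.2) ≤ D ∧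
    -- r = I(X;Y|W) = H(X,W) + H(W,Y) − H(X,W,Y) − H(W)
    r = ent (fun u : 𝒳 × 𝒲 => ∑ y, q (u.1, u.2, y))
        + ent (fun v : 𝒲 × 𝒴 => ∑ x, q (x, v.1, v.2))
        - ent q - ent (fun w => ∑ x, ∑ y, q (x, w, y))}

/-- The joint conditional rate distortion function `R_{X₁X₂|W}(D₁,D₂)`. -/
noncomputable def RDcond2 (pw : (𝒳₁ × 𝒳₂) × 𝒲 → ℝ)
    (d₁ : 𝒳₁ → 𝒴₁ → ℝ) (d₂ : 𝒳₂ → 𝒴₂ → ℝ) (D₁ D₂ : ℝ) : ℝ :=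
  sInf {r : ℝ | ∃ q : (𝒳₁ × 𝒳₂) × 𝒲 × (𝒴₁ × 𝒴₂) → ℝ, IsPMF q ∧
    (∀ x w, (∑ y : 𝒴₁ × 𝒴₂, q (x, w, y)) = pw (x, w)) ∧
    (∑ z, q z * d₁ z.1.1 z.2.2.1) ≤ D₁ ∧
    (∑ z, q z * d₂ z.1.2 z.2.2.2) ≤ D₂ ∧
    r = ent (fun u : (𝒳₁ × 𝒳₂) × 𝒲 => ∑ y : 𝒴₁ × 𝒴₂, q (u.1, u.2, y))
        + ent (fun v : 𝒲 × 𝒴₁ × 𝒴₂ => ∑ x : 𝒳₁ × 𝒳₂, q (x, v.1, v.2))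
        - ent q - ent (fun w => ∑ x : 𝒳₁ × 𝒳₂, ∑ y : 𝒴₁ × 𝒴₂, q (x, w, y))}

/-- Wyner's common information of a pair. -/
noncomputable def wynerC (p : 𝒳₁ × 𝒳₂ → ℝ) : ℝ :=
  sInf {r : ℝ | ∃ n : ℕ, ∃ q : 𝒳₁ × 𝒳₂ × Fin n → ℝ, IsPMF q ∧
    (∀ x₁ x₂, (∑ w, q (x₁, x₂, w)) = p (x₁, x₂)) ∧
    (∀ x₁ x₂ w, q (x₁, x₂, w) * (∑ a, ∑ b, q (a, b, w))
        = (∑ b, q (x₁, b, w)) * (∑ a, q (a, x₂, w))) ∧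
    r = miXXW q}

/-- The minimum common message rate `C₃(D₁,D₂)` of the Gray–Wyner network at
sum rate `R_{X₁X₂}(D₁,D₂)` (the characterization of Theorem 3):
`inf I(X₁,X₂;W)` subject to
`R_{X₁|W}(D₁) + R_{X₂|W}(D₂) + I(X₁,X₂;W) = R_{X₁X₂}(D₁,D₂)`. -/
noncomputable def C3 (p : 𝒳₁ × 𝒳₂ → ℝ)
    (d₁ : 𝒳₁ → 𝒴₁ → ℝ) (d₂ : 𝒳₂ → 𝒴₂ → ℝ) (D₁ D₂ : ℝ) : ℝ :=
  sInf {r : ℝ | ∃ n : ℕ, ∃ q : 𝒳₁ × 𝒳₂ × Fin n → ℝ, IsPMF q ∧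
    (∀ x₁ x₂, (∑ w, q (x₁, x₂, w)) = p (x₁, x₂)) ∧
    RDcond (fun u : 𝒳₁ × Fin n => ∑ x₂, q (u.1, x₂, u.2)) d₁ D₁
      + RDcond (fun u : 𝒳₂ × Fin n => ∑ x₁, q (x₁, u.1, u.2)) d₂ D₂
      + miXXW q = RDjoint p d₁ d₂ D₁ D₂ ∧
    r = miXXW q}

end RD


/- ========== auxiliary lemmas ========== -/

section AuxLemmas

lemma aux_gibbs {ι : Type*} [Fintype ι] (f g : ι → ℝ) (hf : ∀ i, 0 ≤ f i) (hg : ∀ i, 0 ≤ g i)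
    (hfg : ∀ i, f i ≠ 0 → 0 < g i) (hsum : ∑ i, g i ≤ ∑ i, f i) :
    ∑ i, f i * Real.log (g i) ≤ ∑ i, f i * Real.log (f i) := by
  have key : ∀ i, f i * Real.log (g i) - f i * Real.log (f i) ≤ g i - f i := by
    intro i
    rcases eq_or_lt_of_le (hf i) with h0 | hpos
    · simp only [← h0, zero_mul, sub_zero, sub_self]
      exact hg i
    · have hgpos := hfg i (ne_of_gt hpos)
      calc f i * Real.log (g i) - f i * Real.log (f i)
          = f i * Real.log (g i / f i) := by
            rw [← mul_sub, Real.log_div (ne_of_gt hgpos) (ne_of_gt hpos)]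
        _ ≤ f i * (g i / f i - 1) := by
            apply mul_le_mul_of_nonneg_left _ (le_of_lt hpos)
            exact Real.log_le_sub_one_of_pos (div_pos hgpos hpos)
        _ = g i - f i := by field_simp
  have h := Finset.sum_le_sum (fun i (_ : i ∈ Finset.univ) => key i)
  rw [Finset.sum_sub_distrib] at h
  rw [Finset.sum_sub_distrib] at h
  linarith

lemma aux_collapse {Z A B : Type} [Fintype Z] [Fintype A] [Fintype B]
    (e : Z ≃ A × B) (F : Z → ℝ) (G : A → ℝ) :
    ∑ z, F z * G (e z).1 = ∑ a, (∑ b, F (e.symm (a, b))) * G a := by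
  rw [← Equiv.sum_comp e.symm (fun z => F z * G (e z).1)]
  simp only [Equiv.apply_symm_apply]
  rw [Fintype.sum_prod_type]
  exact Finset.sum_congr rfl (fun a _ => by rw [Finset.sum_mul])

lemma aux_split2 {ι : Type*} [Fintype ι] (f a b : ι → ℝ)
    (h : ∀ i, f i ≠ 0 → a i ≠ 0 ∧ b i ≠ 0) :
    ∑ i, f i * Real.log (a i * b i)
      = ∑ i, f i * Real.log (a i) + ∑ i, f i * Real.log (b i) := by
  rw [← Finset.sum_add_distrib]
  apply Finset.sum_congr rfl
  intro i _
  rcases eq_or_ne (f i) 0 with h0 | h0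
  · simp [h0]
  · obtain ⟨ha, hb⟩ := h i h0
    rw [Real.log_mul ha hb]; ring

lemma aux_split3 {ι : Type*} [Fintype ι] (f a b c : ι → ℝ)
    (h : ∀ i, f i ≠ 0 → a i ≠ 0 ∧ b i ≠ 0 ∧ c i ≠ 0) :
    ∑ i, f i * Real.log (a i * b i / c i)
      = ∑ i, f i * Real.log (a i) + ∑ i, f i * Real.log (b i) - ∑ i, f i * Real.log (c i) := by
  rw [← Finset.sum_add_distrib, ← Finset.sum_sub_distrib]
  apply Finset.sum_congr rfl
  intro i _
  rcases eq_or_ne (f i) 0 with h0 | h0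
  · simp [h0]
  · obtain ⟨ha, hb, hc⟩ := h i h0
    rw [Real.log_div (mul_ne_zero ha hb) hc, Real.log_mul ha hb]; ring

lemma aux_split5 {ι : Type*} [Fintype ι] (f a b c d e : ι → ℝ)
    (h : ∀ i, f i ≠ 0 → a i ≠ 0 ∧ b i ≠ 0 ∧ c i ≠ 0 ∧ d i ≠ 0 ∧ e i ≠ 0) :
    ∑ i, f i * Real.log (a i * b i * c i / (d i * e i))
      = ∑ i, f i * Real.log (a i) + ∑ i, f i * Real.log (b i) + ∑ i, f i * Real.log (c i)
        - ∑ i, f i * Real.log (d i) - ∑ i, f i * Real.log (e i) := by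
  rw [← Finset.sum_add_distrib, ← Finset.sum_add_distrib, ← Finset.sum_sub_distrib,
    ← Finset.sum_sub_distrib]
  apply Finset.sum_congr rfl
  intro i _
  rcases eq_or_ne (f i) 0 with h0 | h0
  · simp [h0]
  · obtain ⟨ha, hb, hc, hd, he⟩ := h i h0
    rw [Real.log_div (mul_ne_zero (mul_ne_zero ha hb) hc) (mul_ne_zero hd he),
      Real.log_mul (mul_ne_zero ha hb) hc, Real.log_mul ha hb, Real.log_mul hd he]; ring

lemma single_le_sum' {ι : Type*} [Fintype ι] (f : ι → ℝ) (hf : ∀ i, 0 ≤ f i) (i : ι) :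
    f i ≤ ∑ j, f j :=
  Finset.single_le_sum (fun j _ => hf j) (Finset.mem_univ i)

def eq3A {α β γ : Type} : α × β × γ ≃ (α × β) × γ :=
  ⟨fun z => ((z.1, z.2.1), z.2.2), fun p => (p.1.1, p.1.2, p.2), fun _ => rfl, fun _ => rfl⟩
def eq3B {α β γ : Type} : α × β × γ ≃ (β × γ) × α :=
  ⟨fun z => ((z.2.1, z.2.2), z.1), fun p => (p.2, p.1.1, p.1.2), fun _ => rfl, fun _ => rfl⟩
def eq3C {α β γ : Type} : α × β × γ ≃ β × (α × γ) :=
  ⟨fun z => (z.2.1, z.1, z.2.2), fun p => (p.2.1, p.1, p.2.2), fun _ => rfl, fun _ => rfl⟩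
def eq3D {α β γ : Type} : α × β × γ ≃ γ × (α × β) :=
  ⟨fun z => (z.2.2, z.1, z.2.1), fun p => (p.2.1, p.2.2, p.1), fun _ => rfl, fun _ => rfl⟩
def eq3E {α β γ : Type} : α × β × γ ≃ (α × γ) × β :=
  ⟨fun z => ((z.1, z.2.2), z.2.1), fun p => (p.1.1, p.2, p.1.2), fun _ => rfl, fun _ => rfl⟩
def eqJ1 {α₁ α₂ β γ₁ γ₂ : Type} : (α₁ × α₂) × β × (γ₁ × γ₂) ≃ (α₁ × β × γ₁) × (α₂ × γ₂) :=
  ⟨fun z => ((z.1.1, z.2.1, z.2.2.1), (z.1.2, z.2.2.2)),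
   fun p => ((p.1.1, p.2.1), p.1.2.1, (p.1.2.2, p.2.2)), fun _ => rfl, fun _ => rfl⟩
def eqJ2 {α₁ α₂ β γ₁ γ₂ : Type} : (α₁ × α₂) × β × (γ₁ × γ₂) ≃ (α₂ × β × γ₂) × (α₁ × γ₁) :=
  ⟨fun z => ((z.1.2, z.2.1, z.2.2.2), (z.1.1, z.2.2.1)),
   fun p => ((p.2.1, p.1.1), p.1.2.1, (p.2.2, p.1.2.2)), fun _ => rfl, fun _ => rfl⟩
def eqJW {α₁ α₂ β γ₁ γ₂ : Type} : (α₁ × α₂) × β × (γ₁ × γ₂) ≃ β × ((α₁ × α₂) × (γ₁ × γ₂)) :=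
  ⟨fun z => (z.2.1, (z.1, z.2.2)), fun p => (p.2.1, p.1, p.2.2), fun _ => rfl, fun _ => rfl⟩
def eqJWY {α₁ α₂ β γ₁ γ₂ : Type} : (α₁ × α₂) × β × (γ₁ × γ₂) ≃ (β × (γ₁ × γ₂)) × (α₁ × α₂) :=
  ⟨fun z => ((z.2.1, z.2.2), z.1), fun p => (p.2, p.1.1, p.1.2), fun _ => rfl, fun _ => rfl⟩
def eqJB1 {α₁ α₂ β γ₁ γ₂ : Type} : (α₁ × α₂) × β × (γ₁ × γ₂) ≃ (β × γ₁) × (α₁ × α₂ × γ₂) :=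
  ⟨fun z => ((z.2.1, z.2.2.1), (z.1.1, z.1.2, z.2.2.2)),
   fun p => ((p.2.1, p.2.2.1), p.1.1, (p.1.2, p.2.2.2)), fun _ => rfl, fun _ => rfl⟩
def eqJB2 {α₁ α₂ β γ₁ γ₂ : Type} : (α₁ × α₂) × β × (γ₁ × γ₂) ≃ (β × γ₂) × (α₂ × α₁ × γ₁) :=
  ⟨fun z => ((z.2.1, z.2.2.2), (z.1.2, z.1.1, z.2.2.1)),
   fun p => ((p.2.2.1, p.2.1), p.1.1, (p.2.2.2, p.1.2)), fun _ => rfl, fun _ => rfl⟩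
def eqV1 {β γ₁ γ₂ : Type} : β × (γ₁ × γ₂) ≃ (β × γ₁) × γ₂ :=
  ⟨fun v => ((v.1, v.2.1), v.2.2), fun p => (p.1.1, (p.1.2, p.2)), fun _ => rfl, fun _ => rfl⟩
def eqV2 {β γ₁ γ₂ : Type} : β × (γ₁ × γ₂) ≃ (β × γ₂) × γ₁ :=
  ⟨fun v => ((v.1, v.2.2), v.2.1), fun p => (p.1.1, (p.2, p.1.2)), fun _ => rfl, fun _ => rfl⟩
def eqK1 {α₁ α₂ γ₁ γ₂ : Type} : (α₁ × α₂) × (γ₁ × γ₂) ≃ (α₁ × γ₁) × (α₂ × γ₂) :=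
  ⟨fun z => ((z.1.1, z.2.1), (z.1.2, z.2.2)),
   fun p => ((p.1.1, p.2.1), (p.1.2, p.2.2)), fun _ => rfl, fun _ => rfl⟩
def eqK2 {α₁ α₂ γ₁ γ₂ : Type} : (α₁ × α₂) × (γ₁ × γ₂) ≃ (α₂ × γ₂) × (α₁ × γ₁) :=
  ⟨fun z => ((z.1.2, z.2.2), (z.1.1, z.2.1)),
   fun p => ((p.2.1, p.1.1), (p.2.2, p.1.2)), fun _ => rfl, fun _ => rfl⟩

lemma ent_comp_equiv {A B : Type} [Fintype A] [Fintype B] (e : A ≃ B) (f : B → ℝ) :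
    ent (fun a => f (e a)) = ent f := by
  simp only [ent, neg_inj]
  exact Equiv.sum_comp e (fun b => f b * Real.log (f b))

end AuxLemmas

/-- conditional MI `I(X;Y|W) ≥ 0` in the RDcond shape. -/
lemma cmi_nonneg {𝒳 𝒲 𝒴 : Type} [Fintype 𝒳] [Fintype 𝒲] [Fintype 𝒴]
    (Q : 𝒳 × 𝒲 × 𝒴 → ℝ) (hQ : IsPMF Q) :
    0 ≤ ent (fun u : 𝒳 × 𝒲 => ∑ y, Q (u.1, u.2, y))
        + ent (fun v : 𝒲 × 𝒴 => ∑ x, Q (x, v.1, v.2))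
        - ent Q - ent (fun w => ∑ x, ∑ y, Q (x, w, y)) := by
  obtain ⟨hQ0, hQ1⟩ := hQ
  set A : 𝒳 × 𝒲 → ℝ := fun u => ∑ y, Q (u.1, u.2, y) with hA
  set B : 𝒲 × 𝒴 → ℝ := fun v => ∑ x, Q (x, v.1, v.2) with hB
  set C : 𝒲 → ℝ := fun w => ∑ x, ∑ y, Q (x, w, y) with hC
  have hA0 : ∀ u, 0 ≤ A u := fun u => Finset.sum_nonneg fun y _ => hQ0 _
  have hB0 : ∀ v, 0 ≤ B v := fun v => Finset.sum_nonneg fun x _ => hQ0 _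
  have hC0 : ∀ w, 0 ≤ C w := fun w => Finset.sum_nonneg fun x _ => Finset.sum_nonneg fun y _ => hQ0 _
  have hQA : ∀ z : 𝒳 × 𝒲 × 𝒴, Q z ≤ A (z.1, z.2.1) := by
    rintro ⟨x, w, y⟩; exact single_le_sum' (fun y => Q (x, w, y)) (fun y => hQ0 _) y
  have hQB : ∀ z : 𝒳 × 𝒲 × 𝒴, Q z ≤ B (z.2.1, z.2.2) := by
    rintro ⟨x, w, y⟩; exact single_le_sum' (fun x => Q (x, w, y)) (fun x => hQ0 _) x
  have hQC : ∀ z : 𝒳 × 𝒲 × 𝒴, Q z ≤ C z.2.1 := by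
    rintro ⟨x, w, y⟩
    calc Q (x, w, y) ≤ A (x, w) := hQA (x, w, y)
      _ ≤ ∑ x, A (x, w) := single_le_sum' (fun x => A (x, w)) (fun x => hA0 _) x
      _ = C w := rfl
  set g : 𝒳 × 𝒲 × 𝒴 → ℝ := fun z => A (z.1, z.2.1) * B (z.2.1, z.2.2) / C z.2.1 with hgdef
  have hg0 : ∀ z, 0 ≤ g z := fun z => div_nonneg (mul_nonneg (hA0 _) (hB0 _)) (hC0 _)
  have hfg : ∀ z, Q z ≠ 0 → 0 < g z := by
    intro z hz
    have hq : 0 < Q z := lt_of_le_of_ne (hQ0 z) (Ne.symm hz)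
    exact div_pos (mul_pos (lt_of_lt_of_le hq (hQA z)) (lt_of_lt_of_le hq (hQB z)))
      (lt_of_lt_of_le hq (hQC z))
  have hCY : ∀ w, (∑ y, B (w, y)) = C w := by
    intro w
    show (∑ y, ∑ x, Q (x, w, y)) = ∑ x, ∑ y, Q (x, w, y)
    exact Finset.sum_comm
  have hCsum : ∑ w, C w = 1 := by
    rw [← hQ1, ← Equiv.sum_comp (eq3C (α := 𝒳) (β := 𝒲) (γ := 𝒴)).symm Q]
    rw [Fintype.sum_prod_type]
    apply Finset.sum_congr rfl
    intro w _
    rw [Fintype.sum_prod_type]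
    rfl
  have hsumg : ∑ z, g z ≤ ∑ z, Q z := by
    rw [hQ1]
    calc ∑ z, g z = ∑ p : 𝒲 × (𝒳 × 𝒴), g ((eq3C).symm p) :=
          (Equiv.sum_comp (eq3C (α := 𝒳) (β := 𝒲) (γ := 𝒴)).symm g).symm
      _ = ∑ w, ∑ x, ∑ y, A (x, w) * B (w, y) / C w := by
          rw [Fintype.sum_prod_type]
          refine Finset.sum_congr rfl fun w _ => ?_
          rw [Fintype.sum_prod_type]
          exact Finset.sum_congr rfl fun x _ => Finset.sum_congr rfl fun y _ => rfl
      _ = ∑ w, C w * (C w / C w) := by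
          apply Finset.sum_congr rfl
          intro w _
          have : ∀ x, (∑ y, A (x, w) * B (w, y) / C w) = A (x, w) * (∑ y, B (w, y)) / C w := by
            intro x; rw [← Finset.sum_div, ← Finset.mul_sum]
          rw [Finset.sum_congr rfl (fun x _ => this x), ← Finset.sum_div, ← Finset.sum_mul]
          show C w * (∑ y, B (w, y)) / C w = _
          rw [hCY, mul_div_assoc]
      _ ≤ ∑ w, C w * 1 := Finset.sum_le_sum (fun w _ =>
          mul_le_mul_of_nonneg_left (div_self_le_one _) (hC0 w))
      _ = 1 := by simp only [mul_one]; exact hCsum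
  have gibbs := aux_gibbs Q g hQ0 hg0 hfg hsumg
  have split : ∑ z, Q z * Real.log (g z)
      = ∑ z, Q z * Real.log (A (z.1, z.2.1)) + ∑ z, Q z * Real.log (B (z.2.1, z.2.2))
        - ∑ z, Q z * Real.log (C z.2.1) := by
    apply aux_split3
    intro z hz
    have hq : 0 < Q z := lt_of_le_of_ne (hQ0 z) (Ne.symm hz)
    exact ⟨ne_of_gt (lt_of_lt_of_le hq (hQA z)), ne_of_gt (lt_of_lt_of_le hq (hQB z)),
      ne_of_gt (lt_of_lt_of_le hq (hQC z))⟩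
  have cA : ∑ z, Q z * Real.log (A (z.1, z.2.1)) = ∑ u, A u * Real.log (A u) :=
    aux_collapse eq3A Q (fun u => Real.log (A u))
  have cB : ∑ z, Q z * Real.log (B (z.2.1, z.2.2)) = ∑ v, B v * Real.log (B v) :=
    aux_collapse eq3B Q (fun v => Real.log (B v))
  have cC : ∑ z, Q z * Real.log (C z.2.1) = ∑ w, C w * Real.log (C w) := by
    calc ∑ z, Q z * Real.log (C z.2.1)
        = ∑ w, (∑ b : 𝒳 × 𝒴, Q (eq3C.symm (w, b))) * Real.log (C w) :=
          aux_collapse eq3C Q (fun w => Real.log (C w))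
      _ = ∑ w, C w * Real.log (C w) := by
          apply Finset.sum_congr rfl
          intro w _
          congr 1
          rw [Fintype.sum_prod_type]
          exact Finset.sum_congr rfl fun x _ => Finset.sum_congr rfl fun y _ => rfl
  rw [split, cA, cB, cC] at gibbs
  simp only [ent]
  linarith

/-- `I((X₁,X₂);W) ≥ 0` in the miXXW shape. -/
lemma mi_nonneg {α β γ : Type} [Fintype α] [Fintype β] [Fintype γ]
    (q : α × β × γ → ℝ) (hq : IsPMF q) :
    0 ≤ ent (fun u : α × β => ∑ w, q (u.1, u.2, w))
        + ent (fun w => ∑ a, ∑ b, q (a, b, w)) - ent q := by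
  obtain ⟨h0, h1⟩ := hq
  set A : α × β → ℝ := fun u => ∑ w, q (u.1, u.2, w) with hA
  set C : γ → ℝ := fun w => ∑ a, ∑ b, q (a, b, w) with hC
  have hA0 : ∀ u, 0 ≤ A u := fun u => Finset.sum_nonneg fun w _ => h0 _
  have hC0 : ∀ w, 0 ≤ C w := fun w => Finset.sum_nonneg fun a _ => Finset.sum_nonneg fun b _ => h0 _
  have hqA : ∀ z : α × β × γ, q z ≤ A (z.1, z.2.1) := by
    rintro ⟨a, b, w⟩; exact single_le_sum' (fun w => q (a, b, w)) (fun w => h0 _) w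
  have hqC : ∀ z : α × β × γ, q z ≤ C z.2.2 := by
    rintro ⟨a, b, w⟩
    calc q (a, b, w) ≤ ∑ b', q (a, b', w) := single_le_sum' (fun b' => q (a, b', w)) (fun b' => h0 _) b
      _ ≤ ∑ a', ∑ b', q (a', b', w) := single_le_sum' (fun a' => ∑ b', q (a', b', w))
          (fun a' => Finset.sum_nonneg fun b' _ => h0 _) a
  have hAsum : ∑ u, A u = 1 := by
    calc ∑ u, A u = ∑ u, ∑ w, q (eq3A.symm (u, w)) :=
          Finset.sum_congr rfl fun u _ => Finset.sum_congr rfl fun w _ => rfl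
      _ = ∑ p : (α × β) × γ, q (eq3A.symm p) :=
          (Fintype.sum_prod_type (fun p : (α × β) × γ => q (eq3A.symm p))).symm
      _ = ∑ z, q z := Equiv.sum_comp eq3A.symm q
      _ = 1 := h1
  have hCsum : ∑ w, C w = 1 := by
    calc ∑ w, C w = ∑ w, ∑ b : α × β, q (eq3D.symm (w, b)) := by
          refine Finset.sum_congr rfl fun w _ => ?_
          rw [Fintype.sum_prod_type]
          exact Finset.sum_congr rfl fun a _ => Finset.sum_congr rfl fun b _ => rfl
      _ = ∑ p : γ × (α × β), q (eq3D.symm p) :=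
          (Fintype.sum_prod_type (fun p : γ × (α × β) => q (eq3D.symm p))).symm
      _ = ∑ z, q z := Equiv.sum_comp eq3D.symm q
      _ = 1 := h1
  set g : α × β × γ → ℝ := fun z => A (z.1, z.2.1) * C z.2.2 with hg
  have hg0 : ∀ z, 0 ≤ g z := fun z => mul_nonneg (hA0 _) (hC0 _)
  have hfg : ∀ z, q z ≠ 0 → 0 < g z := by
    intro z hz
    have hp : 0 < q z := lt_of_le_of_ne (h0 z) (Ne.symm hz)
    exact mul_pos (lt_of_lt_of_le hp (hqA z)) (lt_of_lt_of_le hp (hqC z))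
  have hsumg : ∑ z, g z ≤ ∑ z, q z := by
    rw [h1]
    have heq : ∑ z, g z = 1 := by
      calc ∑ z, g z = ∑ p : (α × β) × γ, g (eq3A.symm p) :=
            (Equiv.sum_comp (eq3A (α := α) (β := β) (γ := γ)).symm g).symm
        _ = ∑ u, ∑ w, A u * C w := by
            rw [Fintype.sum_prod_type]
            exact Finset.sum_congr rfl fun u _ => Finset.sum_congr rfl fun w _ => rfl
        _ = (∑ u, A u) * (∑ w, C w) := by rw [Finset.sum_mul_sum]
        _ = 1 := by rw [hAsum, hCsum, mul_one]
    exact le_of_eq heq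
  have gibbs := aux_gibbs q g h0 hg0 hfg hsumg
  have split : ∑ z, q z * Real.log (g z)
      = ∑ z, q z * Real.log (A (z.1, z.2.1)) + ∑ z, q z * Real.log (C z.2.2) := by
    apply aux_split2
    intro z hz
    have hp : 0 < q z := lt_of_le_of_ne (h0 z) (Ne.symm hz)
    exact ⟨ne_of_gt (lt_of_lt_of_le hp (hqA z)), ne_of_gt (lt_of_lt_of_le hp (hqC z))⟩
  have cA : ∑ z, q z * Real.log (A (z.1, z.2.1)) = ∑ u, A u * Real.log (A u) :=
    aux_collapse eq3A q (fun u => Real.log (A u))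
  have cC : ∑ z, q z * Real.log (C z.2.2) = ∑ w, C w * Real.log (C w) := by
    calc ∑ z, q z * Real.log (C z.2.2)
        = ∑ w, (∑ b : α × β, q (eq3D.symm (w, b))) * Real.log (C w) :=
          aux_collapse eq3D q (fun w => Real.log (C w))
      _ = ∑ w, C w * Real.log (C w) := by
          refine Finset.sum_congr rfl fun w _ => ?_
          congr 1
          rw [Fintype.sum_prod_type]
          exact Finset.sum_congr rfl fun a _ => Finset.sum_congr rfl fun b _ => rfl
  rw [split, cA, cC] at gibbs
  simp only [ent]
  linarith

/-- Markov chain entropy identity: H(X₁X₂W) = H(X₁W) + H(X₂W) - H(W). -/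
lemma markov_ent {𝒳₁ 𝒳₂ 𝒲 : Type} [Fintype 𝒳₁] [Fintype 𝒳₂] [Fintype 𝒲]
    (q : 𝒳₁ × 𝒳₂ × 𝒲 → ℝ) (hq0 : ∀ z, 0 ≤ q z)
    (hM : ∀ x₁ x₂ w, q (x₁, x₂, w) * (∑ a, ∑ b, q (a, b, w))
        = (∑ b, q (x₁, b, w)) * (∑ a, q (a, x₂, w))) :
    ent q = ent (fun u : 𝒳₁ × 𝒲 => ∑ x₂, q (u.1, x₂, u.2))
      + ent (fun u : 𝒳₂ × 𝒲 => ∑ x₁, q (x₁, u.1, u.2))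
      - ent (fun w => ∑ x₁, ∑ x₂, q (x₁, x₂, w)) := by
  set q₁ : 𝒳₁ × 𝒲 → ℝ := fun u => ∑ x₂, q (u.1, x₂, u.2) with hq₁
  set q₂ : 𝒳₂ × 𝒲 → ℝ := fun u => ∑ x₁, q (x₁, u.1, u.2) with hq₂
  set qW : 𝒲 → ℝ := fun w => ∑ x₁, ∑ x₂, q (x₁, x₂, w) with hqW
  have hd1 : ∀ z : 𝒳₁ × 𝒳₂ × 𝒲, q z ≤ q₁ (z.1, z.2.2) := by
    rintro ⟨a, b, w⟩; exact single_le_sum' (fun b' => q (a, b', w)) (fun b' => hq0 _) b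
  have hd2 : ∀ z : 𝒳₁ × 𝒳₂ × 𝒲, q z ≤ q₂ (z.2.1, z.2.2) := by
    rintro ⟨a, b, w⟩; exact single_le_sum' (fun a' => q (a', b, w)) (fun a' => hq0 _) a
  have hdW : ∀ z : 𝒳₁ × 𝒳₂ × 𝒲, q z ≤ qW z.2.2 := by
    rintro ⟨a, b, w⟩
    calc q (a, b, w) ≤ q₁ (a, w) := hd1 (a, b, w)
      _ ≤ ∑ a', q₁ (a', w) := single_le_sum' (fun a' => q₁ (a', w))
          (fun a' => Finset.sum_nonneg fun b' _ => hq0 _) a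
      _ = qW w := rfl
  have key : ∑ z, q z * Real.log (q z)
      = ∑ z : 𝒳₁ × 𝒳₂ × 𝒲, q z * Real.log (q₁ (z.1, z.2.2) * q₂ (z.2.1, z.2.2) / qW z.2.2) := by
    refine Finset.sum_congr rfl fun z _ => ?_
    rcases eq_or_ne (q z) 0 with h0 | h0
    · simp [h0]
    · have hpos : 0 < q z := lt_of_le_of_ne (hq0 z) (Ne.symm h0)
      have hWpos : 0 < qW z.2.2 := lt_of_lt_of_le hpos (hdW z)
      have : q z = q₁ (z.1, z.2.2) * q₂ (z.2.1, z.2.2) / qW z.2.2 := by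
        rw [eq_div_iff (ne_of_gt hWpos)]
        exact hM z.1 z.2.1 z.2.2
      rw [← this]
  have split : ∑ z : 𝒳₁ × 𝒳₂ × 𝒲, q z * Real.log (q₁ (z.1, z.2.2) * q₂ (z.2.1, z.2.2) / qW z.2.2)
      = ∑ z, q z * Real.log (q₁ (z.1, z.2.2)) + ∑ z, q z * Real.log (q₂ (z.2.1, z.2.2))
        - ∑ z, q z * Real.log (qW z.2.2) := by
    apply aux_split3
    intro z hz
    have hpos : 0 < q z := lt_of_le_of_ne (hq0 z) (Ne.symm hz)
    exact ⟨ne_of_gt (lt_of_lt_of_le hpos (hd1 z)), ne_of_gt (lt_of_lt_of_le hpos (hd2 z)),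
      ne_of_gt (lt_of_lt_of_le hpos (hdW z))⟩
  have c1 : ∑ z, q z * Real.log (q₁ (z.1, z.2.2)) = ∑ u, q₁ u * Real.log (q₁ u) :=
    aux_collapse eq3E q (fun u => Real.log (q₁ u))
  have c2 : ∑ z, q z * Real.log (q₂ (z.2.1, z.2.2)) = ∑ u, q₂ u * Real.log (q₂ u) :=
    aux_collapse eq3B q (fun u => Real.log (q₂ u))
  have c3 : ∑ z, q z * Real.log (qW z.2.2) = ∑ w, qW w * Real.log (qW w) := by
    calc ∑ z, q z * Real.log (qW z.2.2)
        = ∑ w, (∑ b : 𝒳₁ × 𝒳₂, q (eq3D.symm (w, b))) * Real.log (qW w) :=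
          aux_collapse eq3D q (fun w => Real.log (qW w))
      _ = ∑ w, qW w * Real.log (qW w) := by
          refine Finset.sum_congr rfl fun w _ => ?_
          congr 1
          rw [Fintype.sum_prod_type]
          exact Finset.sum_congr rfl fun a _ => Finset.sum_congr rfl fun b _ => rfl
  simp only [ent]
  rw [key, split, c1, c2, c3]
  ring


lemma prod_channel {𝒳₁ 𝒳₂ 𝒲 𝒴₁ 𝒴₂ : Type}
    [Fintype 𝒳₁] [Fintype 𝒳₂] [Fintype 𝒲] [Fintype 𝒴₁] [Fintype 𝒴₂]
    (q : 𝒳₁ × 𝒳₂ × 𝒲 → ℝ) (hq : IsPMF q)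
    (hM : ∀ x₁ x₂ w, q (x₁, x₂, w) * (∑ a, ∑ b, q (a, b, w))
        = (∑ b, q (x₁, b, w)) * (∑ a, q (a, x₂, w)))
    (d₁ : 𝒳₁ → 𝒴₁ → ℝ) (d₂ : 𝒳₂ → 𝒴₂ → ℝ) (D₁ D₂ : ℝ)
    (Q₁ : 𝒳₁ × 𝒲 × 𝒴₁ → ℝ) (hQ₁ : IsPMF Q₁)
    (hm₁ : ∀ x w, (∑ y, Q₁ (x, w, y)) = ∑ x₂, q (x, x₂, w))
    (hdist₁ : (∑ z, Q₁ z * d₁ z.1 z.2.2) ≤ D₁)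
    (Q₂ : 𝒳₂ × 𝒲 × 𝒴₂ → ℝ) (hQ₂ : IsPMF Q₂)
    (hm₂ : ∀ x w, (∑ y, Q₂ (x, w, y)) = ∑ x₁, q (x₁, x, w))
    (hdist₂ : (∑ z, Q₂ z * d₂ z.1 z.2.2) ≤ D₂) :
    ∃ QQ : (𝒳₁ × 𝒳₂) × 𝒲 × (𝒴₁ × 𝒴₂) → ℝ, IsPMF QQ ∧
      (∀ (x : 𝒳₁ × 𝒳₂) (w : 𝒲), (∑ y : 𝒴₁ × 𝒴₂, QQ (x, w, y)) = q (x.1, x.2, w)) ∧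
      (∑ z, QQ z * d₁ z.1.1 z.2.2.1) ≤ D₁ ∧
      (∑ z, QQ z * d₂ z.1.2 z.2.2.2) ≤ D₂ ∧
      ent (fun u : (𝒳₁ × 𝒳₂) × 𝒲 => ∑ y : 𝒴₁ × 𝒴₂, QQ (u.1, u.2, y))
        + ent (fun v : 𝒲 × 𝒴₁ × 𝒴₂ => ∑ x : 𝒳₁ × 𝒳₂, QQ (x, v.1, v.2))
        - ent QQ - ent (fun w => ∑ x : 𝒳₁ × 𝒳₂, ∑ y : 𝒴₁ × 𝒴₂, QQ (x, w, y))
      = (ent (fun u : 𝒳₁ × 𝒲 => ∑ y, Q₁ (u.1, u.2, y))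
          + ent (fun v : 𝒲 × 𝒴₁ => ∑ x, Q₁ (x, v.1, v.2))
          - ent Q₁ - ent (fun w => ∑ x, ∑ y, Q₁ (x, w, y)))
        + (ent (fun u : 𝒳₂ × 𝒲 => ∑ y, Q₂ (u.1, u.2, y))
          + ent (fun v : 𝒲 × 𝒴₂ => ∑ x, Q₂ (x, v.1, v.2))
          - ent Q₂ - ent (fun w => ∑ x, ∑ y, Q₂ (x, w, y))) := by
  obtain ⟨hq0, hq1⟩ := hq
  obtain ⟨hQ₁0, hQ₁1⟩ := hQ₁
  obtain ⟨hQ₂0, hQ₂1⟩ := hQ₂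
  set q₁ : 𝒳₁ × 𝒲 → ℝ := fun u => ∑ x₂, q (u.1, x₂, u.2) with hq₁def
  set q₂ : 𝒳₂ × 𝒲 → ℝ := fun u => ∑ x₁, q (x₁, u.1, u.2) with hq₂def
  set qW : 𝒲 → ℝ := fun w => ∑ x₁, ∑ x₂, q (x₁, x₂, w) with hqWdef
  set B₁ : 𝒲 × 𝒴₁ → ℝ := fun v => ∑ x, Q₁ (x, v.1, v.2) with hB₁def
  set B₂ : 𝒲 × 𝒴₂ → ℝ := fun v => ∑ x, Q₂ (x, v.1, v.2) with hB₂def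
  have hq₁0 : ∀ u, 0 ≤ q₁ u := fun u => Finset.sum_nonneg fun _ _ => hq0 _
  have hq₂0 : ∀ u, 0 ≤ q₂ u := fun u => Finset.sum_nonneg fun _ _ => hq0 _
  have hqW0 : ∀ w, 0 ≤ qW w :=
    fun w => Finset.sum_nonneg fun _ _ => Finset.sum_nonneg fun _ _ => hq0 _
  -- dominances
  have hq₁W : ∀ x w, q₁ (x, w) ≤ qW w := fun x w =>
    single_le_sum' (fun a => q₁ (a, w)) (fun a => hq₁0 _) x
  have hq₂W : ∀ x w, q₂ (x, w) ≤ qW w := by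
    intro x w
    have : ∑ b, q₂ (b, w) = qW w := Finset.sum_comm
    rw [← this]
    exact single_le_sum' (fun b => q₂ (b, w)) (fun b => hq₂0 _) x
  have hQ₁dom : ∀ x w y, Q₁ (x, w, y) ≤ q₁ (x, w) := fun x w y =>
    le_of_le_of_eq (single_le_sum' (fun y' => Q₁ (x, w, y')) (fun y' => hQ₁0 _) y) (hm₁ x w)
  have hQ₂dom : ∀ x w y, Q₂ (x, w, y) ≤ q₂ (x, w) := fun x w y =>
    le_of_le_of_eq (single_le_sum' (fun y' => Q₂ (x, w, y')) (fun y' => hQ₂0 _) y) (hm₂ x w)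
  -- column sums
  have hsQ₁W : ∀ w, (∑ x, ∑ y, Q₁ (x, w, y)) = qW w := by
    intro w
    calc (∑ x, ∑ y, Q₁ (x, w, y)) = ∑ x, q₁ (x, w) :=
          Finset.sum_congr rfl fun x _ => hm₁ x w
      _ = qW w := rfl
  have hsQ₂W : ∀ w, (∑ x, ∑ y, Q₂ (x, w, y)) = qW w := by
    intro w
    calc (∑ x, ∑ y, Q₂ (x, w, y)) = ∑ x, q₂ (x, w) :=
          Finset.sum_congr rfl fun x _ => hm₂ x w
      _ = qW w := Finset.sum_comm
  have hsB₁W : ∀ w, (∑ y, B₁ (w, y)) = qW w := by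
    intro w
    calc (∑ y, B₁ (w, y)) = ∑ x, ∑ y, Q₁ (x, w, y) := Finset.sum_comm
      _ = qW w := hsQ₁W w
  have hsB₂W : ∀ w, (∑ y, B₂ (w, y)) = qW w := by
    intro w
    calc (∑ y, B₂ (w, y)) = ∑ x, ∑ y, Q₂ (x, w, y) := Finset.sum_comm
      _ = qW w := hsQ₂W w
  have hB₁0 : ∀ v, 0 ≤ B₁ v := fun v => Finset.sum_nonneg fun _ _ => hQ₁0 _
  have hB₂0 : ∀ v, 0 ≤ B₂ v := fun v => Finset.sum_nonneg fun _ _ => hQ₂0 _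
  have hB₁W : ∀ w y, B₁ (w, y) ≤ qW w := by
    intro w y
    rw [← hsB₁W w]
    exact single_le_sum' (fun y' => B₁ (w, y')) (fun y' => hB₁0 _) y
  have hB₂W : ∀ w y, B₂ (w, y) ≤ qW w := by
    intro w y
    rw [← hsB₂W w]
    exact single_le_sum' (fun y' => B₂ (w, y')) (fun y' => hB₂0 _) y
  -- the product channel
  set QQ : (𝒳₁ × 𝒳₂) × 𝒲 × (𝒴₁ × 𝒴₂) → ℝ :=
    fun z => Q₁ (z.1.1, z.2.1, z.2.2.1) * Q₂ (z.1.2, z.2.1, z.2.2.2) / qW z.2.1 with hQQdef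
  have hQQ0 : ∀ z, 0 ≤ QQ z := fun z =>
    div_nonneg (mul_nonneg (hQ₁0 _) (hQ₂0 _)) (hqW0 _)
  -- marginal onto (X,W)
  have hmQQ : ∀ (x : 𝒳₁ × 𝒳₂) (w : 𝒲), (∑ y : 𝒴₁ × 𝒴₂, QQ (x, w, y)) = q (x.1, x.2, w) := by
    intro x w
    have step : (∑ y : 𝒴₁ × 𝒴₂, QQ (x, w, y)) = q₁ (x.1, w) * q₂ (x.2, w) / qW w := by
      rw [Fintype.sum_prod_type]
      have inner : ∀ y₁, (∑ y₂, QQ (x, w, (y₁, y₂)))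
          = Q₁ (x.1, w, y₁) * q₂ (x.2, w) / qW w := by
        intro y₁
        show (∑ y₂, Q₁ (x.1, w, y₁) * Q₂ (x.2, w, y₂) / qW w) = _
        rw [← Finset.sum_div, ← Finset.mul_sum, hm₂]
      rw [Finset.sum_congr rfl fun y₁ _ => inner y₁, ← Finset.sum_div, ← Finset.sum_mul, hm₁]
    rw [step]
    rcases eq_or_ne (qW w) 0 with h0 | h0
    · have hq0' : q (x.1, x.2, w) = 0 := by
        have h1' : q (x.1, x.2, w) ≤ q₁ (x.1, w) :=
          single_le_sum' (fun b => q (x.1, b, w)) (fun b => hq0 _) x.2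
        have h2' : q₁ (x.1, w) ≤ qW w := hq₁W _ _
        have := hq0 (x.1, x.2, w)
        linarith
      have hq₁0' : q₁ (x.1, w) = 0 := by
        have := hq₁W x.1 w
        have := hq₁0 (x.1, w)
        linarith
      rw [hq₁0', zero_mul, zero_div, hq0']
    · rw [div_eq_iff h0]
      exact (hM x.1 x.2 w).symm
  -- total mass
  have hQQ1 : ∑ z, QQ z = 1 := by
    calc ∑ z, QQ z = ∑ p : ((𝒳₁ × 𝒳₂) × 𝒲) × (𝒴₁ × 𝒴₂), QQ (eq3A.symm p) :=
          (Equiv.sum_comp eq3A.symm QQ).symm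
      _ = ∑ u : (𝒳₁ × 𝒳₂) × 𝒲, ∑ y : 𝒴₁ × 𝒴₂, QQ (u.1, u.2, y) := by
          rw [Fintype.sum_prod_type]
          exact Finset.sum_congr rfl fun u _ => Finset.sum_congr rfl fun y _ => rfl
      _ = ∑ u : (𝒳₁ × 𝒳₂) × 𝒲, q (u.1.1, u.1.2, u.2) :=
          Finset.sum_congr rfl fun u _ => hmQQ u.1 u.2
      _ = ∑ z, q z := Equiv.sum_comp eq3A.symm q
      _ = 1 := hq1
  -- marginal channels of QQ
  have hm1QQ : ∀ t : 𝒳₁ × 𝒲 × 𝒴₁,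
      (∑ s : 𝒳₂ × 𝒴₂, QQ ((t.1, s.1), t.2.1, (t.2.2, s.2))) = Q₁ t := by
    rintro ⟨x, w, y⟩
    have step : (∑ s : 𝒳₂ × 𝒴₂, QQ ((x, s.1), w, (y, s.2)))
        = Q₁ (x, w, y) * qW w / qW w := by
      rw [Fintype.sum_prod_type]
      have inner : ∀ x₂, (∑ y₂, QQ ((x, x₂), w, (y, y₂)))
          = Q₁ (x, w, y) * q₂ (x₂, w) / qW w := by
        intro x₂
        show (∑ y₂, Q₁ (x, w, y) * Q₂ (x₂, w, y₂) / qW w) = _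
        rw [← Finset.sum_div, ← Finset.mul_sum, hm₂]
      rw [Finset.sum_congr rfl fun x₂ _ => inner x₂]
      have : (∑ x₂, Q₁ (x, w, y) * q₂ (x₂, w) / qW w)
          = Q₁ (x, w, y) * (∑ x₂, q₂ (x₂, w)) / qW w := by
        rw [← Finset.sum_div, ← Finset.mul_sum]
      rw [this]
      congr 2
      exact Finset.sum_comm
    rw [step]
    rcases eq_or_ne (qW w) 0 with h0 | h0
    · have : Q₁ (x, w, y) = 0 := by
        have h1' := hQ₁dom x w y
        have h2' := hq₁W x w
        have := hQ₁0 (x, w, y)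
        linarith
      rw [this, zero_mul, zero_div]
    · rw [mul_div_assoc, div_self h0, mul_one]
  have hm2QQ : ∀ t : 𝒳₂ × 𝒲 × 𝒴₂,
      (∑ s : 𝒳₁ × 𝒴₁, QQ ((s.1, t.1), t.2.1, (s.2, t.2.2))) = Q₂ t := by
    rintro ⟨x, w, y⟩
    have step : (∑ s : 𝒳₁ × 𝒴₁, QQ ((s.1, x), w, (s.2, y)))
        = Q₂ (x, w, y) * qW w / qW w := by
      rw [Fintype.sum_prod_type]
      have inner : ∀ x₁, (∑ y₁, QQ ((x₁, x), w, (y₁, y)))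
          = q₁ (x₁, w) * Q₂ (x, w, y) / qW w := by
        intro x₁
        show (∑ y₁, Q₁ (x₁, w, y₁) * Q₂ (x, w, y) / qW w) = _
        rw [← Finset.sum_div, ← Finset.sum_mul, hm₁]
      rw [Finset.sum_congr rfl fun x₁ _ => inner x₁]
      have : (∑ x₁, q₁ (x₁, w) * Q₂ (x, w, y) / qW w)
          = (∑ x₁, q₁ (x₁, w)) * Q₂ (x, w, y) / qW w := by
        rw [← Finset.sum_div, ← Finset.sum_mul]
      rw [this, mul_comm]
    rw [step]
    rcases eq_or_ne (qW w) 0 with h0 | h0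
    · have : Q₂ (x, w, y) = 0 := by
        have h1' := hQ₂dom x w y
        have h2' := hq₂W x w
        have := hQ₂0 (x, w, y)
        linarith
      rw [this, zero_mul, zero_div]
    · rw [mul_div_assoc, div_self h0, mul_one]
  -- distortions
  have hdistQQ1 : (∑ z, QQ z * d₁ z.1.1 z.2.2.1) ≤ D₁ := by
    have hc := aux_collapse eqJ1 QQ (fun t : 𝒳₁ × 𝒲 × 𝒴₁ => d₁ t.1 t.2.2)
    calc (∑ z, QQ z * d₁ z.1.1 z.2.2.1)
        = ∑ t : 𝒳₁ × 𝒲 × 𝒴₁, (∑ s : 𝒳₂ × 𝒴₂, QQ (eqJ1.symm (t, s))) * d₁ t.1 t.2.2 := hc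
      _ = ∑ t : 𝒳₁ × 𝒲 × 𝒴₁, Q₁ t * d₁ t.1 t.2.2 :=
          Finset.sum_congr rfl fun t _ => by rw [show (∑ s : 𝒳₂ × 𝒴₂, QQ (eqJ1.symm (t, s))) = Q₁ t from hm1QQ t]
      _ ≤ D₁ := hdist₁
  have hdistQQ2 : (∑ z, QQ z * d₂ z.1.2 z.2.2.2) ≤ D₂ := by
    have hc := aux_collapse eqJ2 QQ (fun t : 𝒳₂ × 𝒲 × 𝒴₂ => d₂ t.1 t.2.2)
    calc (∑ z, QQ z * d₂ z.1.2 z.2.2.2)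
        = ∑ t : 𝒳₂ × 𝒲 × 𝒴₂, (∑ s : 𝒳₁ × 𝒴₁, QQ (eqJ2.symm (t, s))) * d₂ t.1 t.2.2 := hc
      _ = ∑ t : 𝒳₂ × 𝒲 × 𝒴₂, Q₂ t * d₂ t.1 t.2.2 :=
          Finset.sum_congr rfl fun t _ => by rw [show (∑ s : 𝒳₁ × 𝒴₁, QQ (eqJ2.symm (t, s))) = Q₂ t from hm2QQ t]
      _ ≤ D₂ := hdist₂
  -- entropy identities
  have entMarg1 : ent (fun u : 𝒳₁ × 𝒲 => ∑ y, Q₁ (u.1, u.2, y)) = ent q₁ :=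
    congrArg ent (funext fun u => hm₁ u.1 u.2)
  have entMarg2 : ent (fun u : 𝒳₂ × 𝒲 => ∑ y, Q₂ (u.1, u.2, y)) = ent q₂ :=
    congrArg ent (funext fun u => hm₂ u.1 u.2)
  have entW1 : ent (fun w => ∑ x, ∑ y, Q₁ (x, w, y)) = ent qW :=
    congrArg ent (funext hsQ₁W)
  have entW2 : ent (fun w => ∑ x, ∑ y, Q₂ (x, w, y)) = ent qW :=
    congrArg ent (funext hsQ₂W)
  have entA : ent (fun u : (𝒳₁ × 𝒳₂) × 𝒲 => ∑ y : 𝒴₁ × 𝒴₂, QQ (u.1, u.2, y))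
      = ent q₁ + ent q₂ - ent qW := by
    have h : (fun u : (𝒳₁ × 𝒳₂) × 𝒲 => ∑ y : 𝒴₁ × 𝒴₂, QQ (u.1, u.2, y))
        = (fun u : (𝒳₁ × 𝒳₂) × 𝒲 => q (eq3A.symm u)) := funext fun u => hmQQ u.1 u.2
    rw [h, ent_comp_equiv eq3A.symm q, markov_ent q hq0 hM]
  -- entropy of QQ
  have hab : ∀ z, QQ z ≠ 0 → Q₁ (z.1.1, z.2.1, z.2.2.1) ≠ 0
      ∧ Q₂ (z.1.2, z.2.1, z.2.2.2) ≠ 0 ∧ qW z.2.1 ≠ 0 := by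
    intro z hz
    refine ⟨fun h => hz ?_, fun h => hz ?_, fun h => hz ?_⟩
    · show Q₁ (z.1.1, z.2.1, z.2.2.1) * Q₂ (z.1.2, z.2.1, z.2.2.2) / qW z.2.1 = 0
      rw [h, zero_mul, zero_div]
    · show Q₁ (z.1.1, z.2.1, z.2.2.1) * Q₂ (z.1.2, z.2.1, z.2.2.2) / qW z.2.1 = 0
      rw [h, mul_zero, zero_div]
    · show Q₁ (z.1.1, z.2.1, z.2.2.1) * Q₂ (z.1.2, z.2.1, z.2.2.2) / qW z.2.1 = 0
      rw [h, div_zero]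
  have cQ1 : ∑ z, QQ z * Real.log (Q₁ (z.1.1, z.2.1, z.2.2.1))
      = ∑ t, Q₁ t * Real.log (Q₁ t) :=
    (aux_collapse eqJ1 QQ (fun t => Real.log (Q₁ t))).trans
      (Finset.sum_congr rfl fun t _ => by
        rw [show (∑ s : 𝒳₂ × 𝒴₂, QQ (eqJ1.symm (t, s))) = Q₁ t from hm1QQ t])
  have cQ2 : ∑ z, QQ z * Real.log (Q₂ (z.1.2, z.2.1, z.2.2.2))
      = ∑ t, Q₂ t * Real.log (Q₂ t) :=
    (aux_collapse eqJ2 QQ (fun t => Real.log (Q₂ t))).trans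
      (Finset.sum_congr rfl fun t _ => by
        rw [show (∑ s : 𝒳₁ × 𝒴₁, QQ (eqJ2.symm (t, s))) = Q₂ t from hm2QQ t])
  have hWmargQQ : ∀ w, (∑ s : (𝒳₁ × 𝒳₂) × (𝒴₁ × 𝒴₂), QQ (s.1, w, s.2)) = qW w := by
    intro w
    rw [Fintype.sum_prod_type]
    calc ∑ x : 𝒳₁ × 𝒳₂, ∑ y : 𝒴₁ × 𝒴₂, QQ (x, w, y)
        = ∑ x : 𝒳₁ × 𝒳₂, q (x.1, x.2, w) := Finset.sum_congr rfl fun x _ => hmQQ x w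
      _ = qW w := Fintype.sum_prod_type (fun x : 𝒳₁ × 𝒳₂ => q (x.1, x.2, w))
  have cW : ∑ z, QQ z * Real.log (qW z.2.1) = ∑ w, qW w * Real.log (qW w) :=
    (aux_collapse eqJW QQ (fun w => Real.log (qW w))).trans
      (Finset.sum_congr rfl fun w _ => by
        rw [show (∑ s : (𝒳₁ × 𝒳₂) × (𝒴₁ × 𝒴₂), QQ (eqJW.symm (w, s))) = qW w from hWmargQQ w])
  have entQQ : ent QQ = ent Q₁ + ent Q₂ - ent qW := by
    have e0 : ∑ z, QQ z * Real.log (QQ z)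
        = ∑ z, QQ z * Real.log (Q₁ (z.1.1, z.2.1, z.2.2.1))
          + ∑ z, QQ z * Real.log (Q₂ (z.1.2, z.2.1, z.2.2.2))
          - ∑ z, QQ z * Real.log (qW z.2.1) :=
      aux_split3 QQ (fun z => Q₁ (z.1.1, z.2.1, z.2.2.1))
        (fun z => Q₂ (z.1.2, z.2.1, z.2.2.2)) (fun z => qW z.2.1) hab
    simp only [ent]
    rw [e0, cQ1, cQ2, cW]
    ring
  -- entropy of WY-marginal of QQ
  set M : 𝒲 × (𝒴₁ × 𝒴₂) → ℝ := fun v => ∑ x : 𝒳₁ × 𝒳₂, QQ (x, v.1, v.2) with hMdef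
  have hMid : ∀ v, M v = B₁ (v.1, v.2.1) * B₂ (v.1, v.2.2) / qW v.1 := by
    intro v
    show (∑ x : 𝒳₁ × 𝒳₂, QQ (x, v.1, v.2)) = _
    rw [Fintype.sum_prod_type]
    have inner : ∀ x₁, (∑ x₂, QQ ((x₁, x₂), v.1, v.2))
        = Q₁ (x₁, v.1, v.2.1) * B₂ (v.1, v.2.2) / qW v.1 := by
      intro x₁
      show (∑ x₂, Q₁ (x₁, v.1, v.2.1) * Q₂ (x₂, v.1, v.2.2) / qW v.1) = _
      rw [← Finset.sum_div, ← Finset.mul_sum]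
    rw [Finset.sum_congr rfl fun x₁ _ => inner x₁, ← Finset.sum_div, ← Finset.sum_mul]
  have hM0 : ∀ v, 0 ≤ M v := fun v => Finset.sum_nonneg fun _ _ => hQQ0 _
  have habM : ∀ v, M v ≠ 0 → B₁ (v.1, v.2.1) ≠ 0 ∧ B₂ (v.1, v.2.2) ≠ 0 ∧ qW v.1 ≠ 0 := by
    intro v hv
    refine ⟨fun h => hv ?_, fun h => hv ?_, fun h => hv ?_⟩
    · rw [hMid v, h, zero_mul, zero_div]
    · rw [hMid v, h, mul_zero, zero_div]
    · rw [hMid v, h, div_zero]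
  have hMB1 : ∀ u : 𝒲 × 𝒴₁, (∑ y₂, M (u.1, (u.2, y₂))) = B₁ u := by
    intro u
    have step : (∑ y₂, M (u.1, (u.2, y₂))) = B₁ u * qW u.1 / qW u.1 := by
      rw [Finset.sum_congr rfl fun y₂ _ => hMid (u.1, (u.2, y₂))]
      show (∑ y₂, B₁ (u.1, u.2) * B₂ (u.1, y₂) / qW u.1) = _
      rw [← Finset.sum_div, ← Finset.mul_sum, hsB₂W]
    rw [step]
    rcases eq_or_ne (qW u.1) 0 with h0 | h0
    · have : B₁ u = 0 := by
        have h1' : B₁ (u.1, u.2) ≤ qW u.1 := hB₁W u.1 u.2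
        have := hB₁0 u
        have h2' : B₁ u = B₁ (u.1, u.2) := rfl
        linarith [h1', this]
      rw [this, zero_mul, zero_div]
    · rw [mul_div_assoc, div_self h0, mul_one]
  have hMB2 : ∀ u : 𝒲 × 𝒴₂, (∑ y₁, M (u.1, (y₁, u.2))) = B₂ u := by
    intro u
    have step : (∑ y₁, M (u.1, (y₁, u.2))) = qW u.1 * B₂ u / qW u.1 := by
      rw [Finset.sum_congr rfl fun y₁ _ => hMid (u.1, (y₁, u.2))]
      show (∑ y₁, B₁ (u.1, y₁) * B₂ (u.1, u.2) / qW u.1) = _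
      rw [← Finset.sum_div, ← Finset.sum_mul, hsB₁W]
    rw [step]
    rcases eq_or_ne (qW u.1) 0 with h0 | h0
    · have : B₂ u = 0 := by
        have h1' : B₂ (u.1, u.2) ≤ qW u.1 := hB₂W u.1 u.2
        have := hB₂0 u
        linarith [h1']
      rw [this, mul_zero, zero_div]
    · rw [mul_comm, mul_div_assoc, div_self h0, mul_one]
  have hMW : ∀ w, (∑ y : 𝒴₁ × 𝒴₂, M (w, y)) = qW w := by
    intro w
    calc (∑ y : 𝒴₁ × 𝒴₂, M (w, y)) = ∑ x : 𝒳₁ × 𝒳₂, ∑ y : 𝒴₁ × 𝒴₂, QQ (x, w, y) :=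
          Finset.sum_comm
      _ = ∑ x : 𝒳₁ × 𝒳₂, q (x.1, x.2, w) := Finset.sum_congr rfl fun x _ => hmQQ x w
      _ = qW w := Fintype.sum_prod_type (fun x : 𝒳₁ × 𝒳₂ => q (x.1, x.2, w))
  have cB1 : ∑ v, M v * Real.log (B₁ (v.1, v.2.1)) = ∑ u, B₁ u * Real.log (B₁ u) :=
    (aux_collapse eqV1 M (fun u => Real.log (B₁ u))).trans
      (Finset.sum_congr rfl fun u _ => by
        rw [show (∑ y₂, M (eqV1.symm (u, y₂))) = B₁ u from hMB1 u])
  have cB2 : ∑ v, M v * Real.log (B₂ (v.1, v.2.2)) = ∑ u, B₂ u * Real.log (B₂ u) :=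
    (aux_collapse eqV2 M (fun u => Real.log (B₂ u))).trans
      (Finset.sum_congr rfl fun u _ => by
        rw [show (∑ y₁, M (eqV2.symm (u, y₁))) = B₂ u from hMB2 u])
  have cWv : ∑ v, M v * Real.log (qW v.1) = ∑ w, qW w * Real.log (qW w) :=
    (aux_collapse (Equiv.refl (𝒲 × (𝒴₁ × 𝒴₂))) M (fun w => Real.log (qW w))).trans
      (Finset.sum_congr rfl fun w _ => by
        rw [show (∑ y : 𝒴₁ × 𝒴₂, M ((Equiv.refl (𝒲 × (𝒴₁ × 𝒴₂))).symm (w, y))) = qW w from hMW w])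
  have entM : ent M = ent B₁ + ent B₂ - ent qW := by
    have e0 : ∑ v, M v * Real.log (M v)
        = ∑ v, M v * Real.log (B₁ (v.1, v.2.1) * B₂ (v.1, v.2.2) / qW v.1) :=
      Finset.sum_congr rfl fun v _ => by rw [hMid v]
    have e1 : ∑ v, M v * Real.log (B₁ (v.1, v.2.1) * B₂ (v.1, v.2.2) / qW v.1)
        = ∑ v, M v * Real.log (B₁ (v.1, v.2.1)) + ∑ v, M v * Real.log (B₂ (v.1, v.2.2))
          - ∑ v, M v * Real.log (qW v.1) :=
      aux_split3 M (fun v => B₁ (v.1, v.2.1)) (fun v => B₂ (v.1, v.2.2)) (fun v => qW v.1) habM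
    simp only [ent]
    rw [e0, e1, cB1, cB2, cWv]
    ring
  have entWQQ : ent (fun w => ∑ x : 𝒳₁ × 𝒳₂, ∑ y : 𝒴₁ × 𝒴₂, QQ (x, w, y)) = ent qW := by
    refine congrArg ent (funext fun w => ?_)
    calc (∑ x : 𝒳₁ × 𝒳₂, ∑ y : 𝒴₁ × 𝒴₂, QQ (x, w, y))
        = ∑ x : 𝒳₁ × 𝒳₂, q (x.1, x.2, w) := Finset.sum_congr rfl fun x _ => hmQQ x w
      _ = qW w := Fintype.sum_prod_type (fun x : 𝒳₁ × 𝒳₂ => q (x.1, x.2, w))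
  refine ⟨QQ, ⟨hQQ0, hQQ1⟩, hmQQ, hdistQQ1, hdistQQ2, ?_⟩
  have hMeq : ent (fun v : 𝒲 × 𝒴₁ × 𝒴₂ => ∑ x : 𝒳₁ × 𝒳₂, QQ (x, v.1, v.2)) = ent M := rfl
  rw [entA, hMeq, entM, entQQ, entWQQ, entMarg1, entMarg2, entW1, entW2]
  show ent q₁ + ent q₂ - ent qW + (ent B₁ + ent B₂ - ent qW) - (ent Q₁ + ent Q₂ - ent qW) - ent qW
      = ent q₁ + ent B₁ - ent Q₁ - ent qW + (ent q₂ + ent B₂ - ent Q₂ - ent qW)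
  ring

lemma marg_superadd {𝒳₁ 𝒳₂ 𝒲 𝒴₁ 𝒴₂ : Type}
    [Fintype 𝒳₁] [Fintype 𝒳₂] [Fintype 𝒲] [Fintype 𝒴₁] [Fintype 𝒴₂]
    (q : 𝒳₁ × 𝒳₂ × 𝒲 → ℝ) (hq : IsPMF q)
    (hM : ∀ x₁ x₂ w, q (x₁, x₂, w) * (∑ a, ∑ b, q (a, b, w))
        = (∑ b, q (x₁, b, w)) * (∑ a, q (a, x₂, w)))
    (d₁ : 𝒳₁ → 𝒴₁ → ℝ) (d₂ : 𝒳₂ → 𝒴₂ → ℝ) (D₁ D₂ : ℝ)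
    (Q : (𝒳₁ × 𝒳₂) × 𝒲 × (𝒴₁ × 𝒴₂) → ℝ) (hQpmf : IsPMF Q)
    (hmQ : ∀ (x : 𝒳₁ × 𝒳₂) (w : 𝒲), (∑ y : 𝒴₁ × 𝒴₂, Q (x, w, y)) = q (x.1, x.2, w))
    (hdQ1 : (∑ z, Q z * d₁ z.1.1 z.2.2.1) ≤ D₁)
    (hdQ2 : (∑ z, Q z * d₂ z.1.2 z.2.2.2) ≤ D₂) :
    ∃ Q₁ : 𝒳₁ × 𝒲 × 𝒴₁ → ℝ, ∃ Q₂ : 𝒳₂ × 𝒲 × 𝒴₂ → ℝ,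
      IsPMF Q₁ ∧ (∀ x w, (∑ y, Q₁ (x, w, y)) = ∑ x₂, q (x, x₂, w)) ∧
      (∑ z, Q₁ z * d₁ z.1 z.2.2) ≤ D₁ ∧
      IsPMF Q₂ ∧ (∀ x w, (∑ y, Q₂ (x, w, y)) = ∑ x₁, q (x₁, x, w)) ∧
      (∑ z, Q₂ z * d₂ z.1 z.2.2) ≤ D₂ ∧
      (ent (fun u : 𝒳₁ × 𝒲 => ∑ y, Q₁ (u.1, u.2, y))
        + ent (fun v : 𝒲 × 𝒴₁ => ∑ x, Q₁ (x, v.1, v.2))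
        - ent Q₁ - ent (fun w => ∑ x, ∑ y, Q₁ (x, w, y)))
      + (ent (fun u : 𝒳₂ × 𝒲 => ∑ y, Q₂ (u.1, u.2, y))
        + ent (fun v : 𝒲 × 𝒴₂ => ∑ x, Q₂ (x, v.1, v.2))
        - ent Q₂ - ent (fun w => ∑ x, ∑ y, Q₂ (x, w, y)))
      ≤ ent (fun u : (𝒳₁ × 𝒳₂) × 𝒲 => ∑ y : 𝒴₁ × 𝒴₂, Q (u.1, u.2, y))
        + ent (fun v : 𝒲 × 𝒴₁ × 𝒴₂ => ∑ x : 𝒳₁ × 𝒳₂, Q (x, v.1, v.2))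
        - ent Q - ent (fun w => ∑ x : 𝒳₁ × 𝒳₂, ∑ y : 𝒴₁ × 𝒴₂, Q (x, w, y)) := by
  obtain ⟨hq0, hq1⟩ := hq
  obtain ⟨hQ0, hQ1⟩ := hQpmf
  set q₁ : 𝒳₁ × 𝒲 → ℝ := fun u => ∑ x₂, q (u.1, x₂, u.2) with hq₁def
  set q₂ : 𝒳₂ × 𝒲 → ℝ := fun u => ∑ x₁, q (x₁, u.1, u.2) with hq₂def
  set qW : 𝒲 → ℝ := fun w => ∑ x₁, ∑ x₂, q (x₁, x₂, w) with hqWdef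
  set Q₁ : 𝒳₁ × 𝒲 × 𝒴₁ → ℝ :=
    fun t => ∑ s : 𝒳₂ × 𝒴₂, Q ((t.1, s.1), t.2.1, (t.2.2, s.2)) with hQ₁def
  set Q₂ : 𝒳₂ × 𝒲 × 𝒴₂ → ℝ :=
    fun t => ∑ s : 𝒳₁ × 𝒴₁, Q ((s.1, t.1), t.2.1, (s.2, t.2.2)) with hQ₂def
  set M : 𝒲 × (𝒴₁ × 𝒴₂) → ℝ := fun v => ∑ x : 𝒳₁ × 𝒳₂, Q (x, v.1, v.2) with hMdef
  set B₁ : 𝒲 × 𝒴₁ → ℝ := fun v => ∑ x, Q₁ (x, v.1, v.2) with hB₁def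
  set B₂ : 𝒲 × 𝒴₂ → ℝ := fun v => ∑ x, Q₂ (x, v.1, v.2) with hB₂def
  have hQ₁0 : ∀ t, 0 ≤ Q₁ t := fun t => Finset.sum_nonneg fun _ _ => hQ0 _
  have hQ₂0 : ∀ t, 0 ≤ Q₂ t := fun t => Finset.sum_nonneg fun _ _ => hQ0 _
  have hM0 : ∀ v, 0 ≤ M v := fun v => Finset.sum_nonneg fun _ _ => hQ0 _
  have hB₁0 : ∀ v, 0 ≤ B₁ v := fun v => Finset.sum_nonneg fun _ _ => hQ₁0 _
  have hB₂0 : ∀ v, 0 ≤ B₂ v := fun v => Finset.sum_nonneg fun _ _ => hQ₂0 _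
  -- totals
  have hQ₁1 : ∑ t, Q₁ t = 1 := by
    calc ∑ t, Q₁ t = ∑ p : (𝒳₁ × 𝒲 × 𝒴₁) × (𝒳₂ × 𝒴₂), Q (eqJ1.symm p) :=
          (Fintype.sum_prod_type (fun p : (𝒳₁ × 𝒲 × 𝒴₁) × (𝒳₂ × 𝒴₂) => Q (eqJ1.symm p))).symm
      _ = ∑ z, Q z := Equiv.sum_comp eqJ1.symm Q
      _ = 1 := hQ1
  have hQ₂1 : ∑ t, Q₂ t = 1 := by
    calc ∑ t, Q₂ t = ∑ p : (𝒳₂ × 𝒲 × 𝒴₂) × (𝒳₁ × 𝒴₁), Q (eqJ2.symm p) :=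
          (Fintype.sum_prod_type (fun p : (𝒳₂ × 𝒲 × 𝒴₂) × (𝒳₁ × 𝒴₁) => Q (eqJ2.symm p))).symm
      _ = ∑ z, Q z := Equiv.sum_comp eqJ2.symm Q
      _ = 1 := hQ1
  -- marginals
  have hm₁ : ∀ x w, (∑ y, Q₁ (x, w, y)) = q₁ (x, w) := by
    intro x w
    calc (∑ y, Q₁ (x, w, y))
        = ∑ y₁, ∑ x₂, ∑ y₂, Q ((x, x₂), w, (y₁, y₂)) :=
          Finset.sum_congr rfl fun y₁ _ =>
            Fintype.sum_prod_type (fun s : 𝒳₂ × 𝒴₂ => Q ((x, s.1), w, (y₁, s.2)))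
      _ = ∑ x₂, ∑ y₁, ∑ y₂, Q ((x, x₂), w, (y₁, y₂)) := Finset.sum_comm
      _ = ∑ x₂, ∑ y : 𝒴₁ × 𝒴₂, Q ((x, x₂), w, y) := by
          refine Finset.sum_congr rfl fun x₂ _ => ?_
          exact (Fintype.sum_prod_type (fun y : 𝒴₁ × 𝒴₂ => Q ((x, x₂), w, y))).symm
      _ = q₁ (x, w) := Finset.sum_congr rfl fun x₂ _ => hmQ (x, x₂) w
  have hm₂ : ∀ x w, (∑ y, Q₂ (x, w, y)) = q₂ (x, w) := by
    intro x w
    calc (∑ y, Q₂ (x, w, y))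
        = ∑ y₂, ∑ x₁, ∑ y₁, Q ((x₁, x), w, (y₁, y₂)) :=
          Finset.sum_congr rfl fun y₂ _ =>
            Fintype.sum_prod_type (fun s : 𝒳₁ × 𝒴₁ => Q ((s.1, x), w, (s.2, y₂)))
      _ = ∑ x₁, ∑ y₂, ∑ y₁, Q ((x₁, x), w, (y₁, y₂)) := Finset.sum_comm
      _ = ∑ x₁, ∑ y : 𝒴₁ × 𝒴₂, Q ((x₁, x), w, y) := by
          refine Finset.sum_congr rfl fun x₁ _ => ?_
          rw [Fintype.sum_prod_type]
          exact Finset.sum_comm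
      _ = q₂ (x, w) := Finset.sum_congr rfl fun x₁ _ => hmQ (x₁, x) w
  -- distortions
  have hd₁ : (∑ t, Q₁ t * d₁ t.1 t.2.2) ≤ D₁ := by
    have hc := aux_collapse eqJ1 Q (fun t : 𝒳₁ × 𝒲 × 𝒴₁ => d₁ t.1 t.2.2)
    calc (∑ t, Q₁ t * d₁ t.1 t.2.2)
        = ∑ z, Q z * d₁ z.1.1 z.2.2.1 := hc.symm
      _ ≤ D₁ := hdQ1
  have hd₂ : (∑ t, Q₂ t * d₂ t.1 t.2.2) ≤ D₂ := by
    have hc := aux_collapse eqJ2 Q (fun t : 𝒳₂ × 𝒲 × 𝒴₂ => d₂ t.1 t.2.2)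
    calc (∑ t, Q₂ t * d₂ t.1 t.2.2)
        = ∑ z, Q z * d₂ z.1.2 z.2.2.2 := hc.symm
      _ ≤ D₂ := hdQ2
  -- dominances for Gibbs
  have hQM : ∀ z : (𝒳₁ × 𝒳₂) × 𝒲 × (𝒴₁ × 𝒴₂), Q z ≤ M (z.2.1, z.2.2) := by
    rintro ⟨x, w, y⟩
    exact single_le_sum' (fun x' => Q (x', w, y)) (fun x' => hQ0 _) x
  have hQQ₁ : ∀ z : (𝒳₁ × 𝒳₂) × 𝒲 × (𝒴₁ × 𝒴₂), Q z ≤ Q₁ (z.1.1, z.2.1, z.2.2.1) := by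
    rintro ⟨⟨x₁, x₂⟩, w, y₁, y₂⟩
    exact single_le_sum' (fun s : 𝒳₂ × 𝒴₂ => Q ((x₁, s.1), w, (y₁, s.2)))
      (fun s => hQ0 _) (x₂, y₂)
  have hQQ₂ : ∀ z : (𝒳₁ × 𝒳₂) × 𝒲 × (𝒴₁ × 𝒴₂), Q z ≤ Q₂ (z.1.2, z.2.1, z.2.2.2) := by
    rintro ⟨⟨x₁, x₂⟩, w, y₁, y₂⟩
    exact single_le_sum' (fun s : 𝒳₁ × 𝒴₁ => Q ((s.1, x₂), w, (s.2, y₂)))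
      (fun s => hQ0 _) (x₁, y₁)
  have hQ₁B : ∀ t : 𝒳₁ × 𝒲 × 𝒴₁, Q₁ t ≤ B₁ (t.2.1, t.2.2) := by
    rintro ⟨x, w, y⟩
    exact single_le_sum' (fun x' => Q₁ (x', w, y)) (fun x' => hQ₁0 _) x
  have hQ₂B : ∀ t : 𝒳₂ × 𝒲 × 𝒴₂, Q₂ t ≤ B₂ (t.2.1, t.2.2) := by
    rintro ⟨x, w, y⟩
    exact single_le_sum' (fun x' => Q₂ (x', w, y)) (fun x' => hQ₂0 _) x
  -- Gibbs comparison function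
  set g : (𝒳₁ × 𝒳₂) × 𝒲 × (𝒴₁ × 𝒴₂) → ℝ := fun z =>
    M (z.2.1, z.2.2) * Q₁ (z.1.1, z.2.1, z.2.2.1) * Q₂ (z.1.2, z.2.1, z.2.2.2)
      / (B₁ (z.2.1, z.2.2.1) * B₂ (z.2.1, z.2.2.2)) with hgdef
  have hg0 : ∀ z, 0 ≤ g z := fun z =>
    div_nonneg (mul_nonneg (mul_nonneg (hM0 _) (hQ₁0 _)) (hQ₂0 _))
      (mul_nonneg (hB₁0 _) (hB₂0 _))
  have hfg : ∀ z, Q z ≠ 0 → 0 < g z := by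
    intro z hz
    have hp : 0 < Q z := lt_of_le_of_ne (hQ0 z) (Ne.symm hz)
    have h1 := lt_of_lt_of_le hp (hQM z)
    have h2 := lt_of_lt_of_le hp (hQQ₁ z)
    have h3 := lt_of_lt_of_le hp (hQQ₂ z)
    have h4 := lt_of_lt_of_le h2 (hQ₁B (z.1.1, z.2.1, z.2.2.1))
    have h5 := lt_of_lt_of_le h3 (hQ₂B (z.1.2, z.2.1, z.2.2.2))
    exact div_pos (mul_pos (mul_pos h1 h2) h3) (mul_pos h4 h5)
  have hMsum : ∑ v, M v = 1 := by
    calc ∑ v, M v = ∑ p : (𝒲 × (𝒴₁ × 𝒴₂)) × (𝒳₁ × 𝒳₂), Q (eqJWY.symm p) :=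
          (Fintype.sum_prod_type (fun p : (𝒲 × (𝒴₁ × 𝒴₂)) × (𝒳₁ × 𝒳₂) => Q (eqJWY.symm p))).symm
      _ = ∑ z, Q z := Equiv.sum_comp eqJWY.symm Q
      _ = 1 := hQ1
  have hsumg : ∑ z, g z ≤ ∑ z, Q z := by
    rw [hQ1, ← hMsum]
    calc ∑ z, g z = ∑ v : 𝒲 × (𝒴₁ × 𝒴₂), ∑ x : 𝒳₁ × 𝒳₂, g (eqJWY.symm (v, x)) := by
          rw [← Equiv.sum_comp eqJWY.symm g, Fintype.sum_prod_type]
      _ ≤ ∑ v, M v := by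
          apply Finset.sum_le_sum
          intro v _
          have expand : ∑ x : 𝒳₁ × 𝒳₂, g (eqJWY.symm (v, x))
              = M v * B₂ (v.1, v.2.2) * B₁ (v.1, v.2.1)
                / (B₁ (v.1, v.2.1) * B₂ (v.1, v.2.2)) := by
            rw [Fintype.sum_prod_type]
            have inner : ∀ x₁, (∑ x₂, g (eqJWY.symm (v, (x₁, x₂))))
                = M v * Q₁ (x₁, v.1, v.2.1) * B₂ (v.1, v.2.2)
                  / (B₁ (v.1, v.2.1) * B₂ (v.1, v.2.2)) := by
              intro x₁
              show (∑ x₂, M v * Q₁ (x₁, v.1, v.2.1) * Q₂ (x₂, v.1, v.2.2)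
                  / (B₁ (v.1, v.2.1) * B₂ (v.1, v.2.2))) = _
              rw [← Finset.sum_div, ← Finset.mul_sum]
            rw [Finset.sum_congr rfl fun x₁ _ => inner x₁]
            have rearr : ∀ x₁, M v * Q₁ (x₁, v.1, v.2.1) * B₂ (v.1, v.2.2)
                  / (B₁ (v.1, v.2.1) * B₂ (v.1, v.2.2))
                = M v * B₂ (v.1, v.2.2) * Q₁ (x₁, v.1, v.2.1)
                  / (B₁ (v.1, v.2.1) * B₂ (v.1, v.2.2)) := by
              intro x₁; ring
            rw [Finset.sum_congr rfl fun x₁ _ => rearr x₁, ← Finset.sum_div, ← Finset.mul_sum]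
          rw [expand]
          rcases eq_or_ne (B₁ (v.1, v.2.1)) 0 with h0 | h0
          · rw [h0, mul_zero, zero_div]
            exact hM0 v
          rcases eq_or_ne (B₂ (v.1, v.2.2)) 0 with h0' | h0'
          · rw [h0', mul_zero, zero_mul, zero_div]
            exact hM0 v
          · have heq : M v * B₂ (v.1, v.2.2) * B₁ (v.1, v.2.1)
                / (B₁ (v.1, v.2.1) * B₂ (v.1, v.2.2)) = M v := by
              field_simp
            rw [heq]
  -- Gibbs
  have gibbs := aux_gibbs Q g hQ0 hg0 hfg hsumg
  have hab : ∀ z, Q z ≠ 0 → M (z.2.1, z.2.2) ≠ 0 ∧ Q₁ (z.1.1, z.2.1, z.2.2.1) ≠ 0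
      ∧ Q₂ (z.1.2, z.2.1, z.2.2.2) ≠ 0 ∧ B₁ (z.2.1, z.2.2.1) ≠ 0 ∧ B₂ (z.2.1, z.2.2.2) ≠ 0 := by
    intro z hz
    have hp : 0 < Q z := lt_of_le_of_ne (hQ0 z) (Ne.symm hz)
    have h1 := lt_of_lt_of_le hp (hQM z)
    have h2 := lt_of_lt_of_le hp (hQQ₁ z)
    have h3 := lt_of_lt_of_le hp (hQQ₂ z)
    have h4 := lt_of_lt_of_le h2 (hQ₁B (z.1.1, z.2.1, z.2.2.1))
    have h5 := lt_of_lt_of_le h3 (hQ₂B (z.1.2, z.2.1, z.2.2.2))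
    exact ⟨ne_of_gt h1, ne_of_gt h2, ne_of_gt h3, ne_of_gt h4, ne_of_gt h5⟩
  have split : ∑ z, Q z * Real.log (g z)
      = ∑ z, Q z * Real.log (M (z.2.1, z.2.2))
        + ∑ z, Q z * Real.log (Q₁ (z.1.1, z.2.1, z.2.2.1))
        + ∑ z, Q z * Real.log (Q₂ (z.1.2, z.2.1, z.2.2.2))
        - ∑ z, Q z * Real.log (B₁ (z.2.1, z.2.2.1))
        - ∑ z, Q z * Real.log (B₂ (z.2.1, z.2.2.2)) :=
    aux_split5 Q (fun z => M (z.2.1, z.2.2)) (fun z => Q₁ (z.1.1, z.2.1, z.2.2.1))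
      (fun z => Q₂ (z.1.2, z.2.1, z.2.2.2)) (fun z => B₁ (z.2.1, z.2.2.1))
      (fun z => B₂ (z.2.1, z.2.2.2)) hab
  have cM : ∑ z, Q z * Real.log (M (z.2.1, z.2.2)) = ∑ v, M v * Real.log (M v) :=
    aux_collapse eqJWY Q (fun v => Real.log (M v))
  have cQ1 : ∑ z, Q z * Real.log (Q₁ (z.1.1, z.2.1, z.2.2.1))
      = ∑ t, Q₁ t * Real.log (Q₁ t) :=
    aux_collapse eqJ1 Q (fun t => Real.log (Q₁ t))
  have cQ2 : ∑ z, Q z * Real.log (Q₂ (z.1.2, z.2.1, z.2.2.2))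
      = ∑ t, Q₂ t * Real.log (Q₂ t) :=
    aux_collapse eqJ2 Q (fun t => Real.log (Q₂ t))
  have cB1 : ∑ z, Q z * Real.log (B₁ (z.2.1, z.2.2.1)) = ∑ u, B₁ u * Real.log (B₁ u) :=
    (aux_collapse eqJB1 Q (fun u => Real.log (B₁ u))).trans
      (Finset.sum_congr rfl fun u _ => by
        congr 1
        rw [Fintype.sum_prod_type]
        rfl)
  have cB2 : ∑ z, Q z * Real.log (B₂ (z.2.1, z.2.2.2)) = ∑ u, B₂ u * Real.log (B₂ u) :=
    (aux_collapse eqJB2 Q (fun u => Real.log (B₂ u))).trans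
      (Finset.sum_congr rfl fun u _ => by
        congr 1
        rw [Fintype.sum_prod_type]
        rfl)
  have gineq : ∑ v, M v * Real.log (M v) + ∑ t, Q₁ t * Real.log (Q₁ t)
      + ∑ t, Q₂ t * Real.log (Q₂ t) - ∑ u, B₁ u * Real.log (B₁ u)
      - ∑ u, B₂ u * Real.log (B₂ u) ≤ ∑ z, Q z * Real.log (Q z) := by
    rw [split, cM, cQ1, cQ2, cB1, cB2] at gibbs
    exact gibbs
  -- entropy bridges
  have eA1 : ent (fun u : 𝒳₁ × 𝒲 => ∑ y, Q₁ (u.1, u.2, y)) = ent q₁ :=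
    congrArg ent (funext fun u => hm₁ u.1 u.2)
  have eA2 : ent (fun u : 𝒳₂ × 𝒲 => ∑ y, Q₂ (u.1, u.2, y)) = ent q₂ :=
    congrArg ent (funext fun u => hm₂ u.1 u.2)
  have eW1 : ent (fun w => ∑ x, ∑ y, Q₁ (x, w, y)) = ent qW := by
    refine congrArg ent (funext fun w => ?_)
    calc (∑ x, ∑ y, Q₁ (x, w, y)) = ∑ x, q₁ (x, w) :=
          Finset.sum_congr rfl fun x _ => hm₁ x w
      _ = qW w := rfl
  have eW2 : ent (fun w => ∑ x, ∑ y, Q₂ (x, w, y)) = ent qW := by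
    refine congrArg ent (funext fun w => ?_)
    calc (∑ x, ∑ y, Q₂ (x, w, y)) = ∑ x, q₂ (x, w) :=
          Finset.sum_congr rfl fun x _ => hm₂ x w
      _ = qW w := Finset.sum_comm
  have eAQ : ent (fun u : (𝒳₁ × 𝒳₂) × 𝒲 => ∑ y : 𝒴₁ × 𝒴₂, Q (u.1, u.2, y))
      = ent q₁ + ent q₂ - ent qW := by
    have h : (fun u : (𝒳₁ × 𝒳₂) × 𝒲 => ∑ y : 𝒴₁ × 𝒴₂, Q (u.1, u.2, y))
        = (fun u : (𝒳₁ × 𝒳₂) × 𝒲 => q (eq3A.symm u)) := funext fun u => hmQ u.1 u.2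
    rw [h, ent_comp_equiv eq3A.symm q, markov_ent q hq0 hM]
  have eWQ : ent (fun w => ∑ x : 𝒳₁ × 𝒳₂, ∑ y : 𝒴₁ × 𝒴₂, Q (x, w, y)) = ent qW := by
    refine congrArg ent (funext fun w => ?_)
    calc (∑ x : 𝒳₁ × 𝒳₂, ∑ y : 𝒴₁ × 𝒴₂, Q (x, w, y))
        = ∑ x : 𝒳₁ × 𝒳₂, q (x.1, x.2, w) := Finset.sum_congr rfl fun x _ => hmQ x w
      _ = qW w := Fintype.sum_prod_type (fun x : 𝒳₁ × 𝒳₂ => q (x.1, x.2, w))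
  refine ⟨Q₁, Q₂, ⟨hQ₁0, hQ₁1⟩, hm₁, hd₁, ⟨hQ₂0, hQ₂1⟩, hm₂, hd₂, ?_⟩
  rw [eA1, eA2, eW1, eW2, eAQ, eWQ]
  have eM : ent (fun v : 𝒲 × 𝒴₁ × 𝒴₂ => ∑ x : 𝒳₁ × 𝒳₂, Q (x, v.1, v.2)) = ent M := rfl
  rw [eM]
  simp only [ent]
  linarith [gineq]

lemma RDcond_nonneg {𝒳 𝒲 𝒴 : Type} [Fintype 𝒳] [Fintype 𝒲] [Fintype 𝒴]
    (pw : 𝒳 × 𝒲 → ℝ) (d : 𝒳 → 𝒴 → ℝ) (D : ℝ) : 0 ≤ RDcond pw d D := by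
  apply Real.sInf_nonneg
  rintro r ⟨Q, hQ, -, -, rfl⟩
  exact cmi_nonneg Q hQ

lemma RDcond_bddBelow {𝒳 𝒲 𝒴 : Type} [Fintype 𝒳] [Fintype 𝒲] [Fintype 𝒴]
    (pw : 𝒳 × 𝒲 → ℝ) (d : 𝒳 → 𝒴 → ℝ) (D : ℝ) :
    BddBelow {r : ℝ | ∃ q : 𝒳 × 𝒲 × 𝒴 → ℝ, IsPMF q ∧
      (∀ x w, (∑ y, q (x, w, y)) = pw (x, w)) ∧
      (∑ z, q z * d z.1 z.2.2) ≤ D ∧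
      r = ent (fun u : 𝒳 × 𝒲 => ∑ y, q (u.1, u.2, y))
          + ent (fun v : 𝒲 × 𝒴 => ∑ x, q (x, v.1, v.2))
          - ent q - ent (fun w => ∑ x, ∑ y, q (x, w, y))} := by
  refine ⟨0, ?_⟩
  rintro r ⟨Q, hQ, -, -, rfl⟩
  exact cmi_nonneg Q hQ

lemma RDcond_le {𝒳 𝒲 𝒴 : Type} [Fintype 𝒳] [Fintype 𝒲] [Fintype 𝒴]
    (pw : 𝒳 × 𝒲 → ℝ) (d : 𝒳 → 𝒴 → ℝ) (D : ℝ) (Q : 𝒳 × 𝒲 × 𝒴 → ℝ) (hQ : IsPMF Q)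
    (hm : ∀ x w, (∑ y, Q (x, w, y)) = pw (x, w)) (hd : (∑ z, Q z * d z.1 z.2.2) ≤ D) :
    RDcond pw d D ≤ ent (fun u : 𝒳 × 𝒲 => ∑ y, Q (u.1, u.2, y))
        + ent (fun v : 𝒲 × 𝒴 => ∑ x, Q (x, v.1, v.2))
        - ent Q - ent (fun w => ∑ x, ∑ y, Q (x, w, y)) :=
  csInf_le (RDcond_bddBelow pw d D) ⟨Q, hQ, hm, hd, rfl⟩

lemma RDcond_empty {𝒳 𝒲 𝒴 : Type} [Fintype 𝒳] [Fintype 𝒲] [Fintype 𝒴]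
    (pw : 𝒳 × 𝒲 → ℝ) (d : 𝒳 → 𝒴 → ℝ) (D : ℝ)
    (h : ¬ ∃ Q : 𝒳 × 𝒲 × 𝒴 → ℝ, IsPMF Q ∧ (∀ x w, (∑ y, Q (x, w, y)) = pw (x, w)) ∧
      (∑ z, Q z * d z.1 z.2.2) ≤ D) : RDcond pw d D = 0 := by
  unfold RDcond
  have : {r : ℝ | ∃ q : 𝒳 × 𝒲 × 𝒴 → ℝ, IsPMF q ∧
      (∀ x w, (∑ y, q (x, w, y)) = pw (x, w)) ∧
      (∑ z, q z * d z.1 z.2.2) ≤ D ∧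
      r = ent (fun u : 𝒳 × 𝒲 => ∑ y, q (u.1, u.2, y))
          + ent (fun v : 𝒲 × 𝒴 => ∑ x, q (x, v.1, v.2))
          - ent q - ent (fun w => ∑ x, ∑ y, q (x, w, y))} = ∅ := by
    ext r
    simp only [Set.mem_setOf_eq, Set.mem_empty_iff_false, iff_false]
    rintro ⟨Q, hQ, hm, hd, -⟩
    exact h ⟨Q, hQ, hm, hd⟩
  rw [this]
  exact Real.sInf_empty

/-- Transfer a test channel across different side-information alphabets. -/
lemma transfer {𝒳 𝒲 𝒴 : Type} [Fintype 𝒳] [Fintype 𝒲] [Fintype 𝒴]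
    (p₁ : 𝒳 → ℝ) (m : 𝒳 × 𝒴 → ℝ) (hm0 : ∀ z, 0 ≤ m z)
    (hmp : ∀ x, (∑ y, m (x, y)) = p₁ x)
    (d : 𝒳 → 𝒴 → ℝ) (D : ℝ) (hmd : (∑ z, m z * d z.1 z.2) ≤ D)
    (pw : 𝒳 × 𝒲 → ℝ) (hpw0 : ∀ u, 0 ≤ pw u) (hpwp : ∀ x, (∑ w, pw (x, w)) = p₁ x)
    (hpwsum : ∑ u, pw u = 1) :
    ∃ Q : 𝒳 × 𝒲 × 𝒴 → ℝ, IsPMF Q ∧ (∀ x w, (∑ y, Q (x, w, y)) = pw (x, w)) ∧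
      (∑ z, Q z * d z.1 z.2.2) ≤ D := by
  have hp₁0 : ∀ x, 0 ≤ p₁ x := by
    intro x; rw [← hmp x]; exact Finset.sum_nonneg fun _ _ => hm0 _
  have hpwle : ∀ x w, pw (x, w) ≤ p₁ x := by
    intro x w; rw [← hpwp x]
    exact single_le_sum' (fun w' => pw (x, w')) (fun w' => hpw0 _) w
  have hmle : ∀ x y, m (x, y) ≤ p₁ x := by
    intro x y; rw [← hmp x]
    exact single_le_sum' (fun y' => m (x, y')) (fun y' => hm0 _) y
  set Q : 𝒳 × 𝒲 × 𝒴 → ℝ := fun z => pw (z.1, z.2.1) * m (z.1, z.2.2) / p₁ z.1 with hQdef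
  have hQ0 : ∀ z, 0 ≤ Q z := fun z =>
    div_nonneg (mul_nonneg (hpw0 _) (hm0 _)) (hp₁0 _)
  have hmarg : ∀ x w, (∑ y, Q (x, w, y)) = pw (x, w) := by
    intro x w
    have step : (∑ y, Q (x, w, y)) = pw (x, w) * p₁ x / p₁ x := by
      show (∑ y, pw (x, w) * m (x, y) / p₁ x) = _
      rw [← Finset.sum_div, ← Finset.mul_sum, hmp]
    rw [step]
    rcases eq_or_ne (p₁ x) 0 with h0 | h0
    · have : pw (x, w) = 0 := le_antisymm (h0 ▸ hpwle x w) (hpw0 _)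
      rw [this, zero_mul, zero_div]
    · rw [mul_div_assoc, div_self h0, mul_one]
  have hwcol : ∀ x y, (∑ w, Q (x, w, y)) = m (x, y) := by
    intro x y
    have step : (∑ w, Q (x, w, y)) = p₁ x * m (x, y) / p₁ x := by
      show (∑ w, pw (x, w) * m (x, y) / p₁ x) = _
      rw [← Finset.sum_div, ← Finset.sum_mul, hpwp]
    rw [step]
    rcases eq_or_ne (p₁ x) 0 with h0 | h0
    · have : m (x, y) = 0 := le_antisymm (h0 ▸ hmle x y) (hm0 _)
      rw [this, mul_zero, zero_div]
    · rw [mul_comm, mul_div_assoc, div_self h0, mul_one]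
  have hQ1 : ∑ z, Q z = 1 := by
    calc ∑ z, Q z = ∑ p : (𝒳 × 𝒲) × 𝒴, Q (eq3A.symm p) := (Equiv.sum_comp eq3A.symm Q).symm
      _ = ∑ u : 𝒳 × 𝒲, ∑ y, Q (u.1, u.2, y) :=
          Fintype.sum_prod_type (fun p : (𝒳 × 𝒲) × 𝒴 => Q (eq3A.symm p))
      _ = ∑ u : 𝒳 × 𝒲, pw u := Finset.sum_congr rfl fun u _ => hmarg u.1 u.2
      _ = 1 := hpwsum
  have hdist : (∑ z, Q z * d z.1 z.2.2) ≤ D := by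
    calc (∑ z, Q z * d z.1 z.2.2)
        = ∑ u : 𝒳 × 𝒴, (∑ w, Q (u.1, w, u.2)) * d u.1 u.2 :=
          aux_collapse eq3E Q (fun u : 𝒳 × 𝒴 => d u.1 u.2)
      _ = ∑ u : 𝒳 × 𝒴, m u * d u.1 u.2 :=
          Finset.sum_congr rfl fun u _ => by rw [hwcol u.1 u.2]
      _ ≤ D := hmd
  exact ⟨Q, ⟨hQ0, hQ1⟩, hmarg, hdist⟩

/-- Additivity of conditional rate distortion under the Markov chain. -/
lemma rd_additivity {𝒳₁ 𝒳₂ 𝒲 𝒴₁ 𝒴₂ : Type}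
    [Fintype 𝒳₁] [Fintype 𝒳₂] [Fintype 𝒲] [Fintype 𝒴₁] [Fintype 𝒴₂]
    (q : 𝒳₁ × 𝒳₂ × 𝒲 → ℝ) (hq : IsPMF q)
    (hM : ∀ x₁ x₂ w, q (x₁, x₂, w) * (∑ a, ∑ b, q (a, b, w))
        = (∑ b, q (x₁, b, w)) * (∑ a, q (a, x₂, w)))
    (d₁ : 𝒳₁ → 𝒴₁ → ℝ) (d₂ : 𝒳₂ → 𝒴₂ → ℝ) (D₁ D₂ : ℝ)
    (h1 : ∃ Q₁ : 𝒳₁ × 𝒲 × 𝒴₁ → ℝ, IsPMF Q₁ ∧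
      (∀ x w, (∑ y, Q₁ (x, w, y)) = ∑ x₂, q (x, x₂, w)) ∧ (∑ z, Q₁ z * d₁ z.1 z.2.2) ≤ D₁)
    (h2 : ∃ Q₂ : 𝒳₂ × 𝒲 × 𝒴₂ → ℝ, IsPMF Q₂ ∧
      (∀ x w, (∑ y, Q₂ (x, w, y)) = ∑ x₁, q (x₁, x, w)) ∧ (∑ z, Q₂ z * d₂ z.1 z.2.2) ≤ D₂) :
    RDcond (fun u : 𝒳₁ × 𝒲 => ∑ x₂, q (u.1, x₂, u.2)) d₁ D₁
      + RDcond (fun u : 𝒳₂ × 𝒲 => ∑ x₁, q (x₁, u.1, u.2)) d₂ D₂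
      = RDcond2 (fun u : (𝒳₁ × 𝒳₂) × 𝒲 => q (u.1.1, u.1.2, u.2)) d₁ d₂ D₁ D₂ := by
  obtain ⟨P₁, hP₁, hmP₁, hdP₁⟩ := h1
  obtain ⟨P₂, hP₂, hmP₂, hdP₂⟩ := h2
  apply le_antisymm
  · -- sum of infima ≤ joint inf
    obtain ⟨QQ0, hQQ0, hmQQ0, hd1QQ0, hd2QQ0, -⟩ :=
      prod_channel q hq hM d₁ d₂ D₁ D₂ P₁ hP₁ hmP₁ hdP₁ P₂ hP₂ hmP₂ hdP₂
    unfold RDcond2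
    apply le_csInf
    · exact ⟨_, QQ0, hQQ0, hmQQ0, hd1QQ0, hd2QQ0, rfl⟩
    · rintro r ⟨Q, hQpmf, hmQ, hd1Q, hd2Q, rfl⟩
      obtain ⟨Q₁, Q₂, hQ₁, hm₁, hd₁, hQ₂, hm₂, hd₂, hineq⟩ :=
        marg_superadd q hq hM d₁ d₂ D₁ D₂ Q hQpmf hmQ hd1Q hd2Q
      have le₁ := RDcond_le (fun u : 𝒳₁ × 𝒲 => ∑ x₂, q (u.1, x₂, u.2)) d₁ D₁ Q₁ hQ₁ hm₁ hd₁
      have le₂ := RDcond_le (fun u : 𝒳₂ × 𝒲 => ∑ x₁, q (x₁, u.1, u.2)) d₂ D₂ Q₂ hQ₂ hm₂ hd₂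
      linarith
  · -- joint inf ≤ sum of infima
    have key : ∀ r₁ ∈ {r : ℝ | ∃ Q : 𝒳₁ × 𝒲 × 𝒴₁ → ℝ, IsPMF Q ∧
        (∀ x w, (∑ y, Q (x, w, y)) = (fun u : 𝒳₁ × 𝒲 => ∑ x₂, q (u.1, x₂, u.2)) (x, w)) ∧
        (∑ z, Q z * d₁ z.1 z.2.2) ≤ D₁ ∧
        r = ent (fun u : 𝒳₁ × 𝒲 => ∑ y, Q (u.1, u.2, y))
            + ent (fun v : 𝒲 × 𝒴₁ => ∑ x, Q (x, v.1, v.2))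
            - ent Q - ent (fun w => ∑ x, ∑ y, Q (x, w, y))},
        ∀ r₂ ∈ {r : ℝ | ∃ Q : 𝒳₂ × 𝒲 × 𝒴₂ → ℝ, IsPMF Q ∧
        (∀ x w, (∑ y, Q (x, w, y)) = (fun u : 𝒳₂ × 𝒲 => ∑ x₁, q (x₁, u.1, u.2)) (x, w)) ∧
        (∑ z, Q z * d₂ z.1 z.2.2) ≤ D₂ ∧
        r = ent (fun u : 𝒳₂ × 𝒲 => ∑ y, Q (u.1, u.2, y))
            + ent (fun v : 𝒲 × 𝒴₂ => ∑ x, Q (x, v.1, v.2))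
            - ent Q - ent (fun w => ∑ x, ∑ y, Q (x, w, y))},
        RDcond2 (fun u : (𝒳₁ × 𝒳₂) × 𝒲 => q (u.1.1, u.1.2, u.2)) d₁ d₂ D₁ D₂ ≤ r₁ + r₂ := by
      rintro r₁ ⟨Q₁, hQ₁, hm₁, hd₁, rfl⟩ r₂ ⟨Q₂, hQ₂, hm₂, hd₂, rfl⟩
      obtain ⟨QQ, hQQ, hmQQ, hdd₁, hdd₂, hval⟩ :=
        prod_channel q hq hM d₁ d₂ D₁ D₂ Q₁ hQ₁ hm₁ hd₁ Q₂ hQ₂ hm₂ hd₂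
      have hle : RDcond2 (fun u : (𝒳₁ × 𝒳₂) × 𝒲 => q (u.1.1, u.1.2, u.2)) d₁ d₂ D₁ D₂
          ≤ ent (fun u : (𝒳₁ × 𝒳₂) × 𝒲 => ∑ y : 𝒴₁ × 𝒴₂, QQ (u.1, u.2, y))
            + ent (fun v : 𝒲 × 𝒴₁ × 𝒴₂ => ∑ x : 𝒳₁ × 𝒳₂, QQ (x, v.1, v.2))
            - ent QQ - ent (fun w => ∑ x : 𝒳₁ × 𝒳₂, ∑ y : 𝒴₁ × 𝒴₂, QQ (x, w, y)) := by
        unfold RDcond2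
        refine csInf_le ⟨0, ?_⟩ ⟨QQ, hQQ, hmQQ, hdd₁, hdd₂, rfl⟩
        rintro r ⟨Q', hQ', -, -, -, rfl⟩
        exact cmi_nonneg Q' hQ'
      rw [hval] at hle
      exact hle
    have hne₁ : ∃ r₁, r₁ ∈ {r : ℝ | ∃ Q : 𝒳₁ × 𝒲 × 𝒴₁ → ℝ, IsPMF Q ∧
        (∀ x w, (∑ y, Q (x, w, y)) = (fun u : 𝒳₁ × 𝒲 => ∑ x₂, q (u.1, x₂, u.2)) (x, w)) ∧
        (∑ z, Q z * d₁ z.1 z.2.2) ≤ D₁ ∧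
        r = ent (fun u : 𝒳₁ × 𝒲 => ∑ y, Q (u.1, u.2, y))
            + ent (fun v : 𝒲 × 𝒴₁ => ∑ x, Q (x, v.1, v.2))
            - ent Q - ent (fun w => ∑ x, ∑ y, Q (x, w, y))} :=
      ⟨_, P₁, hP₁, hmP₁, hdP₁, rfl⟩
    have hne₂ : ∃ r₂, r₂ ∈ {r : ℝ | ∃ Q : 𝒳₂ × 𝒲 × 𝒴₂ → ℝ, IsPMF Q ∧
        (∀ x w, (∑ y, Q (x, w, y)) = (fun u : 𝒳₂ × 𝒲 => ∑ x₁, q (x₁, u.1, u.2)) (x, w)) ∧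
        (∑ z, Q z * d₂ z.1 z.2.2) ≤ D₂ ∧
        r = ent (fun u : 𝒳₂ × 𝒲 => ∑ y, Q (u.1, u.2, y))
            + ent (fun v : 𝒲 × 𝒴₂ => ∑ x, Q (x, v.1, v.2))
            - ent Q - ent (fun w => ∑ x, ∑ y, Q (x, w, y))} :=
      ⟨_, P₂, hP₂, hmP₂, hdP₂, rfl⟩
    show RDcond2 _ d₁ d₂ D₁ D₂ ≤ RDcond _ d₁ D₁ + RDcond _ d₂ D₂
    unfold RDcond
    have step1 : ∀ r₂ ∈ {r : ℝ | ∃ Q : 𝒳₂ × 𝒲 × 𝒴₂ → ℝ, IsPMF Q ∧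
        (∀ x w, (∑ y, Q (x, w, y)) = (fun u : 𝒳₂ × 𝒲 => ∑ x₁, q (x₁, u.1, u.2)) (x, w)) ∧
        (∑ z, Q z * d₂ z.1 z.2.2) ≤ D₂ ∧
        r = ent (fun u : 𝒳₂ × 𝒲 => ∑ y, Q (u.1, u.2, y))
            + ent (fun v : 𝒲 × 𝒴₂ => ∑ x, Q (x, v.1, v.2))
            - ent Q - ent (fun w => ∑ x, ∑ y, Q (x, w, y))},
        RDcond2 (fun u : (𝒳₁ × 𝒳₂) × 𝒲 => q (u.1.1, u.1.2, u.2)) d₁ d₂ D₁ D₂ - r₂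
          ≤ sInf {r : ℝ | ∃ Q : 𝒳₁ × 𝒲 × 𝒴₁ → ℝ, IsPMF Q ∧
            (∀ x w, (∑ y, Q (x, w, y)) = (fun u : 𝒳₁ × 𝒲 => ∑ x₂, q (u.1, x₂, u.2)) (x, w)) ∧
            (∑ z, Q z * d₁ z.1 z.2.2) ≤ D₁ ∧
            r = ent (fun u : 𝒳₁ × 𝒲 => ∑ y, Q (u.1, u.2, y))
                + ent (fun v : 𝒲 × 𝒴₁ => ∑ x, Q (x, v.1, v.2))
                - ent Q - ent (fun w => ∑ x, ∑ y, Q (x, w, y))} := by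
      intro r₂ h₂
      apply le_csInf hne₁
      intro r₁ h₁
      have := key r₁ h₁ r₂ h₂
      linarith
    have step2 : RDcond2 (fun u : (𝒳₁ × 𝒳₂) × 𝒲 => q (u.1.1, u.1.2, u.2)) d₁ d₂ D₁ D₂
        - sInf {r : ℝ | ∃ Q : 𝒳₁ × 𝒲 × 𝒴₁ → ℝ, IsPMF Q ∧
            (∀ x w, (∑ y, Q (x, w, y)) = (fun u : 𝒳₁ × 𝒲 => ∑ x₂, q (u.1, x₂, u.2)) (x, w)) ∧
            (∑ z, Q z * d₁ z.1 z.2.2) ≤ D₁ ∧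
            r = ent (fun u : 𝒳₁ × 𝒲 => ∑ y, Q (u.1, u.2, y))
                + ent (fun v : 𝒲 × 𝒴₁ => ∑ x, Q (x, v.1, v.2))
                - ent Q - ent (fun w => ∑ x, ∑ y, Q (x, w, y))}
        ≤ sInf {r : ℝ | ∃ Q : 𝒳₂ × 𝒲 × 𝒴₂ → ℝ, IsPMF Q ∧
            (∀ x w, (∑ y, Q (x, w, y)) = (fun u : 𝒳₂ × 𝒲 => ∑ x₁, q (x₁, u.1, u.2)) (x, w)) ∧
            (∑ z, Q z * d₂ z.1 z.2.2) ≤ D₂ ∧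
            r = ent (fun u : 𝒳₂ × 𝒲 => ∑ y, Q (u.1, u.2, y))
                + ent (fun v : 𝒲 × 𝒴₂ => ∑ x, Q (x, v.1, v.2))
                - ent Q - ent (fun w => ∑ x, ∑ y, Q (x, w, y))} := by
      apply le_csInf hne₂
      intro r₂ h₂
      have := step1 r₂ h₂
      linarith
    linarith [step2]

lemma RDjoint_empty {𝒳₁ 𝒳₂ 𝒴₁ 𝒴₂ : Type}
    [Fintype 𝒳₁] [Fintype 𝒳₂] [Fintype 𝒴₁] [Fintype 𝒴₂]
    (p : 𝒳₁ × 𝒳₂ → ℝ) (d₁ : 𝒳₁ → 𝒴₁ → ℝ) (d₂ : 𝒳₂ → 𝒴₂ → ℝ) (D₁ D₂ : ℝ)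
    (h : ¬ ∃ Q : (𝒳₁ × 𝒳₂) × 𝒴₁ × 𝒴₂ → ℝ, IsPMF Q ∧
      (∀ x : 𝒳₁ × 𝒳₂, (∑ y₁, ∑ y₂, Q (x, y₁, y₂)) = p x) ∧
      (∑ z, Q z * d₁ z.1.1 z.2.1) ≤ D₁ ∧ (∑ z, Q z * d₂ z.1.2 z.2.2) ≤ D₂) :
    RDjoint p d₁ d₂ D₁ D₂ = 0 := by
  unfold RDjoint
  have he : {r : ℝ | ∃ q : (𝒳₁ × 𝒳₂) × 𝒴₁ × 𝒴₂ → ℝ, IsPMF q ∧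
      (∀ x : 𝒳₁ × 𝒳₂, (∑ y₁, ∑ y₂, q (x, y₁, y₂)) = p x) ∧
      (∑ z, q z * d₁ z.1.1 z.2.1) ≤ D₁ ∧
      (∑ z, q z * d₂ z.1.2 z.2.2) ≤ D₂ ∧
      r = ent (fun x : 𝒳₁ × 𝒳₂ => ∑ y₁, ∑ y₂, q (x, y₁, y₂))
          + ent (fun y : 𝒴₁ × 𝒴₂ => ∑ x : 𝒳₁ × 𝒳₂, q (x, y.1, y.2)) - ent q} = ∅ := by
    ext r
    simp only [Set.mem_setOf_eq, Set.mem_empty_iff_false, iff_false]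
    rintro ⟨Q, hQ, hm, hd1, hd2, -⟩
    exact h ⟨Q, hQ, hm, hd1, hd2⟩
  rw [he]
  exact Real.sInf_empty

lemma sInf_le_of_mem_imp {S : Set ℝ} {c : ℝ} (hc : 0 ≤ c)
    (h : ∀ r ∈ S, 0 ≤ r ∧ r ≤ c) : sInf S ≤ c := by
  rcases S.eq_empty_or_nonempty with rfl | ⟨r, hr⟩
  · rw [Real.sInf_empty]; exact hc
  · exact le_trans (csInf_le ⟨0, fun x hx => (h x hx).1⟩ hr) (h r hr).2

lemma C3_le_val {𝒳₁ 𝒳₂ 𝒴₁ 𝒴₂ : Type}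
    [Fintype 𝒳₁] [Fintype 𝒳₂] [Fintype 𝒴₁] [Fintype 𝒴₂]
    (p : 𝒳₁ × 𝒳₂ → ℝ) (d₁ : 𝒳₁ → 𝒴₁ → ℝ) (d₂ : 𝒳₂ → 𝒴₂ → ℝ) (D₁ D₂ : ℝ)
    {n : ℕ} (q : 𝒳₁ × 𝒳₂ × Fin n → ℝ) (hq : IsPMF q)
    (hm : ∀ x₁ x₂, (∑ w, q (x₁, x₂, w)) = p (x₁, x₂))
    (hcon : RDcond (fun u : 𝒳₁ × Fin n => ∑ x₂, q (u.1, x₂, u.2)) d₁ D₁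
      + RDcond (fun u : 𝒳₂ × Fin n => ∑ x₁, q (x₁, u.1, u.2)) d₂ D₂
      + miXXW q = RDjoint p d₁ d₂ D₁ D₂) :
    C3 p d₁ d₂ D₁ D₂ ≤ miXXW q := by
  unfold C3
  refine csInf_le ⟨0, ?_⟩ ⟨n, q, hq, hm, hcon, rfl⟩
  rintro r ⟨n', q', hq', -, -, rfl⟩
  exact mi_nonneg q' hq'

lemma C3_le_of_bound {𝒳₁ 𝒳₂ 𝒴₁ 𝒴₂ : Type}
    [Fintype 𝒳₁] [Fintype 𝒳₂] [Fintype 𝒴₁] [Fintype 𝒴₂]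
    (p : 𝒳₁ × 𝒳₂ → ℝ) (d₁ : 𝒳₁ → 𝒴₁ → ℝ) (d₂ : 𝒳₂ → 𝒴₂ → ℝ) (D₁ D₂ : ℝ)
    (c : ℝ) (hc : 0 ≤ c)
    (h : ∀ (n' : ℕ) (q' : 𝒳₁ × 𝒳₂ × Fin n' → ℝ), IsPMF q' →
      (∀ x₁ x₂, (∑ w, q' (x₁, x₂, w)) = p (x₁, x₂)) →
      RDcond (fun u : 𝒳₁ × Fin n' => ∑ x₂, q' (u.1, x₂, u.2)) d₁ D₁
        + RDcond (fun u : 𝒳₂ × Fin n' => ∑ x₁, q' (x₁, u.1, u.2)) d₂ D₂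
        + miXXW q' = RDjoint p d₁ d₂ D₁ D₂ → miXXW q' ≤ c) :
    C3 p d₁ d₂ D₁ D₂ ≤ c := by
  unfold C3
  apply sInf_le_of_mem_imp hc
  rintro r ⟨n', q', hq', hm', hcon', rfl⟩
  exact ⟨mi_nonneg q' hq', h n' q' hq' hm' hcon'⟩

/-- If `W` achieves Wyner's common information of `(X₁,X₂)` (Markov chain
`X₁ − W − X₂` and `I(X₁,X₂;W) = C(X₁,X₂)`) and
`R_{X₁X₂|W}(D₁,D₂) + C(X₁,X₂) = R_{X₁X₂}(D₁,D₂)`, then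
`C₃(D₁,D₂) ≤ C(X₁,X₂)`. -/
theorem C3_le_wynerC {𝒳₁ 𝒳₂ 𝒴₁ 𝒴₂ : Type}
    [Fintype 𝒳₁] [Fintype 𝒳₂] [Fintype 𝒴₁] [Fintype 𝒴₂]
    (p : 𝒳₁ × 𝒳₂ → ℝ) (hp : IsPMF p)
    (d₁ : 𝒳₁ → 𝒴₁ → ℝ) (d₂ : 𝒳₂ → 𝒴₂ → ℝ) (D₁ D₂ : ℝ)
    (n : ℕ) (q : 𝒳₁ × 𝒳₂ × Fin n → ℝ) (hq : IsPMF q)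
    (hmarg : ∀ x₁ x₂, (∑ w, q (x₁, x₂, w)) = p (x₁, x₂))
    (hMarkov : ∀ x₁ x₂ w, q (x₁, x₂, w) * (∑ a, ∑ b, q (a, b, w))
        = (∑ b, q (x₁, b, w)) * (∑ a, q (a, x₂, w)))
    (hach : miXXW q = wynerC p)
    (hsum : RDcond2 (fun u : (𝒳₁ × 𝒳₂) × Fin n => q (u.1.1, u.1.2, u.2)) d₁ d₂ D₁ D₂
        + wynerC p = RDjoint p d₁ d₂ D₁ D₂) :
    C3 p d₁ d₂ D₁ D₂ ≤ wynerC p := by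
  have hq0 := hq.1
  have hq1 := hq.2
  have hmi0 : (0:ℝ) ≤ miXXW q := mi_nonneg q hq
  have hw0 : (0:ℝ) ≤ wynerC p := hach ▸ hmi0
  by_cases h1 : ∃ Q₁ : 𝒳₁ × Fin n × 𝒴₁ → ℝ, IsPMF Q₁ ∧
      (∀ x w, (∑ y, Q₁ (x, w, y)) = ∑ x₂, q (x, x₂, w)) ∧ (∑ z, Q₁ z * d₁ z.1 z.2.2) ≤ D₁
  · by_cases h2 : ∃ Q₂ : 𝒳₂ × Fin n × 𝒴₂ → ℝ, IsPMF Q₂ ∧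
        (∀ x w, (∑ y, Q₂ (x, w, y)) = ∑ x₁, q (x₁, x, w)) ∧ (∑ z, Q₂ z * d₂ z.1 z.2.2) ≤ D₂
    · -- non-degenerate case
      have hadd := rd_additivity q hq hMarkov d₁ d₂ D₁ D₂ h1 h2
      have hle : C3 p d₁ d₂ D₁ D₂ ≤ miXXW q := by
        apply C3_le_val p d₁ d₂ D₁ D₂ q hq hmarg
        rw [hadd, hach]
        exact hsum
      rw [← hach]
      exact hle
    · -- degenerate in coordinate 2
      have hq₂sum : ∀ x : 𝒳₂, (∑ w, ∑ x₁, q (x₁, x, w)) = ∑ x₁, p (x₁, x) := by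
        intro x
        rw [Finset.sum_comm]
        exact Finset.sum_congr rfl fun x₁ _ => hmarg x₁ x
      have hq₂tot : (∑ u : 𝒳₂ × Fin n, ∑ x₁, q (x₁, u.1, u.2)) = 1 := by
        calc (∑ u : 𝒳₂ × Fin n, ∑ x₁, q (x₁, u.1, u.2))
            = ∑ p' : (𝒳₂ × Fin n) × 𝒳₁, q (eq3B.symm p') :=
              (Fintype.sum_prod_type (fun p' : (𝒳₂ × Fin n) × 𝒳₁ => q (eq3B.symm p'))).symm
          _ = ∑ z, q z := Equiv.sum_comp eq3B.symm q
          _ = 1 := hq1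
      have noM : ¬ ∃ m : 𝒳₂ × 𝒴₂ → ℝ, (∀ z, 0 ≤ m z) ∧
          (∀ x, (∑ y, m (x, y)) = ∑ x₁, p (x₁, x)) ∧ (∑ z, m z * d₂ z.1 z.2) ≤ D₂ := by
        rintro ⟨m, hm0, hmp, hmd⟩
        exact h2 (transfer (fun x => ∑ x₁, p (x₁, x)) m hm0 hmp d₂ D₂ hmd
          (fun u : 𝒳₂ × Fin n => ∑ x₁, q (x₁, u.1, u.2))
          (fun u => Finset.sum_nonneg fun _ _ => hq0 _) hq₂sum hq₂tot)
      have hRJ : RDjoint p d₁ d₂ D₁ D₂ = 0 := by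
        apply RDjoint_empty
        rintro ⟨QJ, hQJ, hmJ, hd1J, hd2J⟩
        apply noM
        refine ⟨fun u => ∑ s : 𝒳₁ × 𝒴₁, QJ ((s.1, u.1), (s.2, u.2)),
          fun u => Finset.sum_nonneg fun _ _ => hQJ.1 _, ?_, ?_⟩
        · intro x
          calc (∑ y, ∑ s : 𝒳₁ × 𝒴₁, QJ ((s.1, x), (s.2, y)))
              = ∑ y, ∑ x₁, ∑ y₁, QJ ((x₁, x), (y₁, y)) :=
                Finset.sum_congr rfl fun y _ =>
                  Fintype.sum_prod_type (fun s : 𝒳₁ × 𝒴₁ => QJ ((s.1, x), (s.2, y)))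
            _ = ∑ x₁, ∑ y, ∑ y₁, QJ ((x₁, x), (y₁, y)) := Finset.sum_comm
            _ = ∑ x₁, ∑ y₁, ∑ y, QJ ((x₁, x), (y₁, y)) :=
                Finset.sum_congr rfl fun x₁ _ => Finset.sum_comm
            _ = ∑ x₁, p (x₁, x) := Finset.sum_congr rfl fun x₁ _ => hmJ (x₁, x)
        · calc (∑ u : 𝒳₂ × 𝒴₂, (∑ s : 𝒳₁ × 𝒴₁, QJ ((s.1, u.1), (s.2, u.2))) * d₂ u.1 u.2)
              = ∑ z, QJ z * d₂ z.1.2 z.2.2 :=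
                (aux_collapse eqK2 QJ (fun u : 𝒳₂ × 𝒴₂ => d₂ u.1 u.2)).symm
            _ ≤ D₂ := hd2J
      apply C3_le_of_bound p d₁ d₂ D₁ D₂ (wynerC p) hw0
      intro n' q' hq' hmarg' hcon'
      have hz : RDcond (fun u : 𝒳₂ × Fin n' => ∑ x₁, q' (x₁, u.1, u.2)) d₂ D₂ = 0 := by
        apply RDcond_empty
        rintro ⟨Q', hQ', hm', hd'⟩
        apply noM
        refine ⟨fun u => ∑ w', Q' (u.1, w', u.2),
          fun u => Finset.sum_nonneg fun _ _ => hQ'.1 _, ?_, ?_⟩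
        · intro x
          calc (∑ y, ∑ w', Q' (x, w', y))
              = ∑ w', ∑ y, Q' (x, w', y) := Finset.sum_comm
            _ = ∑ w', ∑ x₁, q' (x₁, x, w') := Finset.sum_congr rfl fun w' _ => hm' x w'
            _ = ∑ x₁, ∑ w', q' (x₁, x, w') := Finset.sum_comm
            _ = ∑ x₁, p (x₁, x) := Finset.sum_congr rfl fun x₁ _ => hmarg' x₁ x
        · calc (∑ u : 𝒳₂ × 𝒴₂, (∑ w', Q' (u.1, w', u.2)) * d₂ u.1 u.2)
              = ∑ t, Q' t * d₂ t.1 t.2.2 :=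
                (aux_collapse eq3E Q' (fun u : 𝒳₂ × 𝒴₂ => d₂ u.1 u.2)).symm
            _ ≤ D₂ := hd'
      have hnn := RDcond_nonneg (fun u : 𝒳₁ × Fin n' => ∑ x₂, q' (u.1, x₂, u.2)) d₁ D₁
      have hmi' : (0:ℝ) ≤ miXXW q' := mi_nonneg q' hq'
      rw [hz, hRJ] at hcon'
      linarith
  · -- degenerate in coordinate 1
    have hq₁sum : ∀ x : 𝒳₁, (∑ w, ∑ x₂, q (x, x₂, w)) = ∑ x₂, p (x, x₂) := by
      intro x
      rw [Finset.sum_comm]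
      exact Finset.sum_congr rfl fun x₂ _ => hmarg x x₂
    have hq₁tot : (∑ u : 𝒳₁ × Fin n, ∑ x₂, q (u.1, x₂, u.2)) = 1 := by
      calc (∑ u : 𝒳₁ × Fin n, ∑ x₂, q (u.1, x₂, u.2))
          = ∑ p' : (𝒳₁ × Fin n) × 𝒳₂, q (eq3E.symm p') :=
            (Fintype.sum_prod_type (fun p' : (𝒳₁ × Fin n) × 𝒳₂ => q (eq3E.symm p'))).symm
        _ = ∑ z, q z := Equiv.sum_comp eq3E.symm q
        _ = 1 := hq1
    have noM : ¬ ∃ m : 𝒳₁ × 𝒴₁ → ℝ, (∀ z, 0 ≤ m z) ∧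
        (∀ x, (∑ y, m (x, y)) = ∑ x₂, p (x, x₂)) ∧ (∑ z, m z * d₁ z.1 z.2) ≤ D₁ := by
      rintro ⟨m, hm0, hmp, hmd⟩
      exact h1 (transfer (fun x => ∑ x₂, p (x, x₂)) m hm0 hmp d₁ D₁ hmd
        (fun u : 𝒳₁ × Fin n => ∑ x₂, q (u.1, x₂, u.2))
        (fun u => Finset.sum_nonneg fun _ _ => hq0 _) hq₁sum hq₁tot)
    have hRJ : RDjoint p d₁ d₂ D₁ D₂ = 0 := by
      apply RDjoint_empty
      rintro ⟨QJ, hQJ, hmJ, hd1J, hd2J⟩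
      apply noM
      refine ⟨fun u => ∑ s : 𝒳₂ × 𝒴₂, QJ ((u.1, s.1), (u.2, s.2)),
        fun u => Finset.sum_nonneg fun _ _ => hQJ.1 _, ?_, ?_⟩
      · intro x
        calc (∑ y, ∑ s : 𝒳₂ × 𝒴₂, QJ ((x, s.1), (y, s.2)))
            = ∑ y, ∑ x₂, ∑ y₂, QJ ((x, x₂), (y, y₂)) :=
              Finset.sum_congr rfl fun y _ =>
                Fintype.sum_prod_type (fun s : 𝒳₂ × 𝒴₂ => QJ ((x, s.1), (y, s.2)))
          _ = ∑ x₂, ∑ y, ∑ y₂, QJ ((x, x₂), (y, y₂)) := Finset.sum_comm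
          _ = ∑ x₂, p (x, x₂) := Finset.sum_congr rfl fun x₂ _ => hmJ (x, x₂)
      · calc (∑ u : 𝒳₁ × 𝒴₁, (∑ s : 𝒳₂ × 𝒴₂, QJ ((u.1, s.1), (u.2, s.2))) * d₁ u.1 u.2)
            = ∑ z, QJ z * d₁ z.1.1 z.2.1 :=
              (aux_collapse eqK1 QJ (fun u : 𝒳₁ × 𝒴₁ => d₁ u.1 u.2)).symm
          _ ≤ D₁ := hd1J
    apply C3_le_of_bound p d₁ d₂ D₁ D₂ (wynerC p) hw0
    intro n' q' hq' hmarg' hcon'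
    have hz : RDcond (fun u : 𝒳₁ × Fin n' => ∑ x₂, q' (u.1, x₂, u.2)) d₁ D₁ = 0 := by
      apply RDcond_empty
      rintro ⟨Q', hQ', hm', hd'⟩
      apply noM
      refine ⟨fun u => ∑ w', Q' (u.1, w', u.2),
        fun u => Finset.sum_nonneg fun _ _ => hQ'.1 _, ?_, ?_⟩
      · intro x
        calc (∑ y, ∑ w', Q' (x, w', y))
            = ∑ w', ∑ y, Q' (x, w', y) := Finset.sum_comm
          _ = ∑ w', ∑ x₂, q' (x, x₂, w') := Finset.sum_congr rfl fun w' _ => hm' x w'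
          _ = ∑ x₂, ∑ w', q' (x, x₂, w') := Finset.sum_comm
          _ = ∑ x₂, p (x, x₂) := Finset.sum_congr rfl fun x₂ _ => hmarg' x x₂
      · calc (∑ u : 𝒳₁ × 𝒴₁, (∑ w', Q' (u.1, w', u.2)) * d₁ u.1 u.2)
            = ∑ t, Q' t * d₁ t.1 t.2.2 :=
              (aux_collapse eq3E Q' (fun u : 𝒳₁ × 𝒴₁ => d₁ u.1 u.2)).symm
          _ ≤ D₁ := hd'
    have hnn := RDcond_nonneg (fun u : 𝒳₂ × Fin n' => ∑ x₁, q' (x₁, u.1, u.2)) d₂ D₂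
    have hmi' : (0:ℝ) ≤ miXXW q' := mi_nonneg q' hq'
    rw [hz, hRJ] at hcon'
    linarith
end
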